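/- arXiv:1112.1469 — 13 statements merged into one kernel-verified Lean document; each statement's English description precedes it below -/
import Mathlib

section
/- Let m, n ≥ 1 and let C be a positive semidefinite complex matrix indexed by Fin m × Fin n satisfying the channel normalization: for all g, g' ∈ Fin n, ∑_{f ∈ Fin m} C ((f,g),(f,g')) equals 1 if g = g' and 0 otherwise (i.e. the partial trace of C over the first (output) factor is the identity matrix I_n). If ρ₀ is a density matrix on Fin m such that (ρ₀ ⊗ I_n) − C is positive semidefinite, then C = ρ₀ ⊗ I_n. (In other words, a quantum channel can satisfy the causality bound with probability p = 1 only if it is an erasure channel.) -/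
open Matrix
open scoped Kronecker ComplexOrder

/-! Both `C` and `ρ₀ ⊗ I_n` have trace `n`: the first because its partial trace is `I_n`, the
second because `tr ρ₀ = 1`. So the positive semidefinite difference `ρ₀ ⊗ I_n - C` has trace
zero, and a positive semidefinite matrix of trace zero vanishes. -/

namespace Matrix

variable {ι κ 𝕜 : Type*} [Fintype ι] [Fintype κ]

lemma trace_eq_card_of_partialTrace_diag_eq_one [AddCommMonoidWithOne 𝕜]
    {C : Matrix (ι × κ) (ι × κ) 𝕜} (hC : ∀ g, ∑ f, C (f, g) (f, g) = 1) :
    C.trace = Fintype.card κ := by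
  simp [trace, Fintype.sum_prod_type, Finset.sum_comm (γ := ι), hC]

lemma PosSemidef.eq_of_sub_of_trace_eq [RCLike 𝕜] {A B : Matrix ι ι 𝕜}
    (hBA : (B - A).PosSemidef) (htr : A.trace = B.trace) : A = B :=
  (sub_eq_zero.mp (hBA.trace_eq_zero_iff.mp (by rw [trace_sub, htr, sub_self]))).symm

end Matrix

theorem erasure_of_prob_one_general (m n : ℕ)
    (C : Matrix (Fin m × Fin n) (Fin m × Fin n) ℂ)
    (hTr : ∀ g g' : Fin n, ∑ f : Fin m, C (f, g) (f, g') = if g = g' then 1 else 0)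
    (ρ₀ : Matrix (Fin m) (Fin m) ℂ) (hρ₀tr : ρ₀.trace = 1)
    (hle : (ρ₀ ⊗ₖ (1 : Matrix (Fin n) (Fin n) ℂ) - C).PosSemidef) :
    C = ρ₀ ⊗ₖ (1 : Matrix (Fin n) (Fin n) ℂ) := by
  refine hle.eq_of_sub_of_trace_eq ?_
  rw [trace_eq_card_of_partialTrace_diag_eq_one fun g ↦ by simpa using hTr g g,
    trace_kronecker, hρ₀tr, trace_one, one_mul]

/-- A quantum channel (given by its Choi matrix `C`) can satisfy the causality bound
with probability `p = 1` only if it is an erasure channel. -/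
theorem erasure_of_prob_one (m n : ℕ) (hm : 1 ≤ m) (hn : 1 ≤ n)
    (C : Matrix (Fin m × Fin n) (Fin m × Fin n) ℂ)
    (hC : C.PosSemidef)
    (hTr : ∀ g g' : Fin n, ∑ f : Fin m, C (f, g) (f, g') = if g = g' then 1 else 0)
    (ρ₀ : Matrix (Fin m) (Fin m) ℂ) (hρ₀ : ρ₀.PosSemidef) (hρ₀tr : ρ₀.trace = 1)
    (hle : (ρ₀ ⊗ₖ (1 : Matrix (Fin n) (Fin n) ℂ) - C).PosSemidef) :
    C = ρ₀ ⊗ₖ (1 : Matrix (Fin n) (Fin n) ℂ) :=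
  erasure_of_prob_one_general m n C hTr ρ₀ hρ₀tr hle
end

section
/- Let X be a finite nonempty index set and m, n ≥ 1. For each i ∈ X let ρ_i be a density matrix on Fin m and let P_i be a positive semidefinite matrix on Fin n, with ∑_{i ∈ X} P_i = I_n. Then the matrix (I_m ⊗ I_n) − ∑_{i ∈ X} ρ_i ⊗ P_iᵀ is positive semidefinite; that is, the largest eigenvalue of the Choi matrix C = ∑_{i ∈ X} ρ_i ⊗ P_iᵀ of any measure-and-prepare channel is at most 1. -/
/-!
Since `∑ Pᵢ = 1`, the matrix `1 - ∑ ρᵢ ⊗ Pᵢᵀ` equals `∑ (1 - ρᵢ) ⊗ Pᵢᵀ`, a sum of Kronecker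
products of positive semidefinite matrices: each eigenvalue of a density matrix is bounded by
the sum of all of them, its trace `1`, so `ρᵢ ≤ 1`.
-/

open Matrix
open scoped Kronecker ComplexOrder

namespace Matrix

variable {ι l m n p α : Type*}

theorem sub_kronecker [NonUnitalNonAssocRing α] (A₁ A₂ : Matrix l m α) (B : Matrix n p α) :
    (A₁ - A₂) ⊗ₖ B = A₁ ⊗ₖ B - A₂ ⊗ₖ B := by
  ext
  simp [sub_mul]

theorem kronecker_sum [NonUnitalNonAssocSemiring α] (A : Matrix l m α) (s : Finset ι)
    (B : ι → Matrix n p α) : A ⊗ₖ ∑ i ∈ s, B i = ∑ i ∈ s, A ⊗ₖ B i := by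
  ext
  simp [sum_apply, Finset.mul_sum]

theorem one_sub_sum_kronecker [Fintype ι] [Ring α] [DecidableEq l] [DecidableEq m]
    (A : ι → Matrix l l α) {B : ι → Matrix m m α} (hB : ∑ i, B i = 1) :
    1 - ∑ i, A i ⊗ₖ B i = ∑ i, (1 - A i) ⊗ₖ B i :=
  calc 1 - ∑ i, A i ⊗ₖ B i = (1 : Matrix l l α) ⊗ₖ ∑ i, B i - ∑ i, A i ⊗ₖ B i := by
        rw [hB, one_kronecker_one]
    _ = ∑ i, (1 - A i) ⊗ₖ B i := by
        simp only [kronecker_sum, ← Finset.sum_sub_distrib, sub_kronecker]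

section PosSemidef

variable {𝕜 : Type*} [RCLike 𝕜] [Fintype n] [DecidableEq n] {A : Matrix n n 𝕜}

theorem PosSemidef.eigenvalues_le_re_trace (hA : A.PosSemidef) (i : n) :
    hA.1.eigenvalues i ≤ RCLike.re A.trace := by
  rw [hA.1.trace_eq_sum_eigenvalues, ← RCLike.ofReal_sum, RCLike.ofReal_re]
  exact Finset.single_le_sum (fun j _ => hA.eigenvalues_nonneg j) (Finset.mem_univ i)

open scoped MatrixOrder in
theorem PosSemidef.one_sub_of_trace_eq_one (hA : A.PosSemidef) (htr : A.trace = 1) :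
    (1 - A).PosSemidef := by
  refine le_iff.mp ((CFC.le_one_iff (R := ℝ) A hA.1.isSelfAdjoint).mpr fun x hx => ?_)
  rw [hA.1.spectrum_real_eq_range_eigenvalues] at hx
  obtain ⟨i, rfl⟩ := hx
  simpa [htr] using hA.eigenvalues_le_re_trace i

end PosSemidef

end Matrix

theorem measure_prepare_choi_le_one_general (X : Type) [Fintype X]
    (m n : ℕ)
    (ρ : X → Matrix (Fin m) (Fin m) ℂ)
    (hρ : ∀ i, (ρ i).PosSemidef) (hρtr : ∀ i, (ρ i).trace = 1)
    (P : X → Matrix (Fin n) (Fin n) ℂ)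
    (hP : ∀ i, (P i).PosSemidef) (hPsum : ∑ i, P i = 1) :
    ((1 : Matrix (Fin m × Fin n) (Fin m × Fin n) ℂ) - ∑ i, ρ i ⊗ₖ (P i)ᵀ).PosSemidef := by
  have hPTsum : ∑ i, (P i)ᵀ = 1 := by rw [← transpose_sum, hPsum, transpose_one]
  rw [one_sub_sum_kronecker ρ hPTsum]
  exact posSemidef_sum _ fun i _ =>
    ((hρ i).one_sub_of_trace_eq_one (hρtr i)).kronecker (hP i).transpose

/-- The Choi matrix of a measure-and-prepare channel has largest eigenvalue at most 1. -/
theorem measure_prepare_choi_le_one (X : Type) [Fintype X] [Nonempty X]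
    (m n : ℕ) (hm : 1 ≤ m) (hn : 1 ≤ n)
    (ρ : X → Matrix (Fin m) (Fin m) ℂ)
    (hρ : ∀ i, (ρ i).PosSemidef) (hρtr : ∀ i, (ρ i).trace = 1)
    (P : X → Matrix (Fin n) (Fin n) ℂ)
    (hP : ∀ i, (P i).PosSemidef) (hPsum : ∑ i, P i = 1) :
    ((1 : Matrix (Fin m × Fin n) (Fin m × Fin n) ℂ) - ∑ i, ρ i ⊗ₖ (P i)ᵀ).PosSemidef :=
  measure_prepare_choi_le_one_general X m n ρ hρ hρtr P hP hPsum
end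

section
/- Let d ≥ 1 and let C_cl be the matrix indexed by Fin d × Fin d given by C_cl = ∑_{i ∈ Fin d} E_{ii} ⊗ E_{ii}, where E_{ii} is the matrix unit with a single 1 in position (i,i). For a real number p ≥ 0, there exists a density matrix ρ₀ on Fin d such that (ρ₀ ⊗ I_d) − p·C_cl is positive semidefinite if and only if p ≤ 1/d. (The maximum probability of simulating an ideal classical channel from the future to the past is 1/d.) -/
/-!
Every diagonal entry of `ρ₀ ⊗ I - p C_cl` at `(i, i), (i, i)` is `ρ₀ i i - p`, so positivity forces
`p ≤ ρ₀ i i` for all `i`, and summing over `i` gives `d p ≤ tr ρ₀ = 1`. Conversely, for the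
maximally mixed state `ρ₀ = I / d` the matrix `ρ₀ ⊗ I - p C_cl` is diagonal with entries
`1/d - p` and `1/d`, which are nonnegative as soon as `p ≤ 1/d`.
-/

open Matrix
open scoped Kronecker ComplexOrder

namespace Matrix

variable {n : Type*} [Fintype n] [DecidableEq n]

/-- The Choi matrix `C_cl` of the completely dephasing channel `ρ ↦ ∑ i, ⟨i|ρ|i⟩ |i⟩⟨i|`. -/
def classicalChoi (n R : Type*) [Fintype n] [DecidableEq n] [Semiring R] :
    Matrix (n × n) (n × n) R :=
  ∑ i : n, single i i (1 : R) ⊗ₖ single i i (1 : R)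

theorem classicalChoi_eq_diagonal {R : Type*} [Semiring R] :
    classicalChoi n R = diagonal fun ij => if ij.1 = ij.2 then 1 else 0 := by
  ext ⟨a, b⟩ ⟨c, e⟩
  simp only [classicalChoi, sum_apply, single_kronecker_single, single_apply, diagonal_apply,
    Prod.ext_iff, ite_and, Finset.sum_ite_eq', Finset.mem_univ, if_true]
  grind

theorem mul_card_le_one_of_posSemidef_kronecker_one_sub {ρ : Matrix n n ℂ} (hρ : ρ.trace = 1)
    {p : ℝ} (h : (ρ ⊗ₖ (1 : Matrix n n ℂ) - (p : ℂ) • classicalChoi n ℂ).PosSemidef) :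
    p * Fintype.card n ≤ 1 := by
  have hdiag (i : n) : (p : ℂ) ≤ ρ i i := by
    simpa [kronecker_apply, classicalChoi_eq_diagonal] using h.diag_nonneg (i := (i, i))
  have : ((p * Fintype.card n : ℝ) : ℂ) ≤ ((1 : ℝ) : ℂ) := calc
    _ = ∑ _i : n, (p : ℂ) := by simp [mul_comm]
    _ ≤ ∑ i, ρ i i := Finset.sum_le_sum fun i _ => hdiag i
    _ = _ := by simpa [trace] using hρ
  exact_mod_cast this

theorem posSemidef_inv_card_smul_one_kronecker_one_sub [Nonempty n] {p : ℝ}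
    (hp : p * Fintype.card n ≤ 1) :
    (((Fintype.card n : ℂ)⁻¹ • 1 : Matrix n n ℂ) ⊗ₖ (1 : Matrix n n ℂ) -
      (p : ℂ) • classicalChoi n ℂ).PosSemidef := by
  have hp' : p ≤ (Fintype.card n : ℝ)⁻¹ := by
    rwa [← one_div, le_div_iff₀ (by exact_mod_cast Fintype.card_pos)]
  rw [smul_kronecker, one_kronecker_one, classicalChoi_eq_diagonal, ← diagonal_one,
    ← diagonal_smul, ← diagonal_smul, diagonal_sub, posSemidef_diagonal_iff]
  rintro ⟨i, j⟩
  have hcast : (Fintype.card n : ℂ)⁻¹ = ((Fintype.card n : ℝ)⁻¹ : ℝ) := by push_cast; rfl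
  simp only [Pi.smul_apply, smul_eq_mul, mul_one, mul_ite, mul_zero, hcast]
  split_ifs
  · rw [← Complex.ofReal_sub, Complex.zero_le_real]
    exact sub_nonneg.mpr hp'
  · rw [sub_zero, Complex.zero_le_real]
    positivity

theorem exists_state_posSemidef_kronecker_one_sub_classicalChoi_iff [Nonempty n] (p : ℝ) :
    (∃ ρ : Matrix n n ℂ, ρ.PosSemidef ∧ ρ.trace = 1 ∧
        (ρ ⊗ₖ (1 : Matrix n n ℂ) - (p : ℂ) • classicalChoi n ℂ).PosSemidef) ↔
      p * Fintype.card n ≤ 1 := by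
  refine ⟨fun ⟨_, _, hρ, h⟩ => mul_card_le_one_of_posSemidef_kronecker_one_sub hρ h,
    fun hp => ⟨(Fintype.card n : ℂ)⁻¹ • 1, ?_, by simp,
      posSemidef_inv_card_smul_one_kronecker_one_sub hp⟩⟩
  exact PosSemidef.one.smul (by positivity)

end Matrix

theorem classical_channel_sim_prob_general (d : ℕ) (hd : 1 ≤ d) (p : ℝ) :
    (∃ ρ₀ : Matrix (Fin d) (Fin d) ℂ, ρ₀.PosSemidef ∧ ρ₀.trace = 1 ∧
        (ρ₀ ⊗ₖ (1 : Matrix (Fin d) (Fin d) ℂ) -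
          (p : ℂ) • ∑ i : Fin d,
            single i i (1 : ℂ) ⊗ₖ single i i (1 : ℂ)).PosSemidef)
      ↔ p ≤ 1 / d := by
  have : Nonempty (Fin d) := ⟨⟨0, hd⟩⟩
  rw [le_div_iff₀ (by exact_mod_cast hd)]
  have h := exists_state_posSemidef_kronecker_one_sub_classicalChoi_iff (n := Fin d) p
  rwa [Fintype.card_fin] at h

/-- The maximum probability of simulating an ideal classical channel on a d-dimensional
system from the future to the past is 1/d. -/
theorem classical_channel_sim_prob (d : ℕ) (hd : 1 ≤ d) (p : ℝ) (hp : 0 ≤ p) :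
    (∃ ρ₀ : Matrix (Fin d) (Fin d) ℂ, ρ₀.PosSemidef ∧ ρ₀.trace = 1 ∧
        (ρ₀ ⊗ₖ (1 : Matrix (Fin d) (Fin d) ℂ) -
          (p : ℂ) • ∑ i : Fin d,
            single i i (1 : ℂ) ⊗ₖ single i i (1 : ℂ)).PosSemidef)
      ↔ p ≤ 1 / d :=
  classical_channel_sim_prob_general d hd p
end

section
/- Let d ≥ 1 and let Φ_d be the matrix indexed by Fin d × Fin d whose entry at row (a,b), column (c,e) is 1 if a = b and c = e, and 0 otherwise (the rank-one projector onto the unnormalized maximally entangled vector ∑_i e_i ⊗ e_i). For a real number p ≥ 0, there exists a density matrix ρ₀ on Fin d such that (ρ₀ ⊗ I_d) − p·Φ_d is positive semidefinite if and only if p ≤ 1/d². (The maximum probability of simulating an ideal quantum channel—the identity channel—from the future to the past is 1/d², the success probability of the standard probabilistic teleportation protocol.) -/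
open Matrix
open scoped Kronecker ComplexOrder

/-- The rank-one projector onto the unnormalized maximally entangled vector,
i.e. the Choi matrix of the identity channel on a d-dimensional system. -/
noncomputable def PhiMax (d : ℕ) : Matrix (Fin d × Fin d) (Fin d × Fin d) ℂ :=
  Matrix.of fun p q => if p.1 = p.2 ∧ q.1 = q.2 then 1 else 0

/-!
`PhiMax d = v vᴴ` with `v = vec 1 = |I⟩⟩`. Since `⟨⟨I| (ρ₀ ⊗ 1) |I⟩⟩ = tr ρ₀ = 1` and
`⟨⟨I|I⟩⟩ = d`, testing the constraint on `v` gives `1 - p d² ≥ 0`. Conversely `ρ₀ = 1 / d`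
works: then `ρ₀ ⊗ 1 = 1 / d`, and `p v vᴴ ≤ p d • 1 ≤ 1 / d` by Cauchy–Schwarz.
-/

namespace Matrix

variable {n 𝕜 : Type*} [Fintype n] [RCLike 𝕜]

/-- Cauchy–Schwarz in Loewner form: `v vᴴ ≤ ‖v‖² • 1`. -/
theorem posSemidef_dotProduct_star_self_smul_one_sub_vecMulVec [DecidableEq n] (v : n → 𝕜) :
    ((star v ⬝ᵥ v) • (1 : Matrix n n 𝕜) - vecMulVec v (star v)).PosSemidef := by
  refine .of_dotProduct_mulVec_nonneg ?_ fun x => ?_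
  · exact ((IsSelfAdjoint.of_nonneg (dotProduct_star_self_nonneg v)).smul
      (IsSelfAdjoint.one _)).sub (posSemidef_vecMulVec_self_star v).isHermitian
  · let X : EuclideanSpace 𝕜 n := WithLp.toLp 2 x
    let V : EuclideanSpace 𝕜 n := WithLp.toLp 2 v
    have hquad : star x ⬝ᵥ (((star v ⬝ᵥ v) • (1 : Matrix n n 𝕜) - vecMulVec v (star v)) *ᵥ x)
        = inner 𝕜 V V * inner 𝕜 X X - inner 𝕜 X V * inner 𝕜 V X := by
      simp only [EuclideanSpace.inner_toLp_toLp, X, V, sub_mulVec, smul_mulVec, one_mulVec,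
        vecMulVec_mulVec, dotProduct_sub, dotProduct_smul, smul_eq_mul,
        MulOpposite.smul_eq_mul_unop, MulOpposite.unop_op]
      rw [dotProduct_comm v, dotProduct_comm x, dotProduct_comm v (star x),
        dotProduct_comm x (star v)]
    have hCS : ‖inner 𝕜 V X‖ ^ 2 ≤ ‖V‖ ^ 2 * ‖X‖ ^ 2 := by
      rw [← mul_pow]
      exact pow_le_pow_left₀ (norm_nonneg _) (norm_inner_le_norm V X) 2
    rw [hquad, inner_self_eq_norm_sq_to_K, inner_self_eq_norm_sq_to_K, ← inner_conj_symm X V,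
      RCLike.conj_mul]
    exact_mod_cast sub_nonneg.mpr hCS

theorem posSemidef_smul_one_sub_smul_vecMulVec [DecidableEq n] {v : n → 𝕜} {s t : 𝕜}
    (ht : 0 ≤ t) (hst : t * (star v ⬝ᵥ v) ≤ s) :
    (s • (1 : Matrix n n 𝕜) - t • vecMulVec v (star v)).PosSemidef := by
  have hsplit : s • (1 : Matrix n n 𝕜) - t • vecMulVec v (star v) =
      (s - t * (star v ⬝ᵥ v)) • 1 + t • ((star v ⬝ᵥ v) • 1 - vecMulVec v (star v)) := by
    module
  rw [hsplit]
  exact (PosSemidef.one.smul (sub_nonneg.mpr hst)).add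
    ((posSemidef_dotProduct_star_self_smul_one_sub_vecMulVec v).smul ht)

section CommSemiring

variable {R : Type*} [CommSemiring R] [StarRing R]

theorem star_dotProduct_vecMulVec_mulVec_self (v : n → R) :
    star v ⬝ᵥ (vecMulVec v (star v) *ᵥ v) = (star v ⬝ᵥ v) ^ 2 := by
  rw [vecMulVec_mulVec, op_smul_eq_smul, dotProduct_smul, smul_eq_mul, sq]

variable [DecidableEq n]

theorem star_vec_one_dotProduct_vec_one :
    star (vec (1 : Matrix n n R)) ⬝ᵥ vec (1 : Matrix n n R) = Fintype.card n := by
  simp [star_vec_dotProduct_vec]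

theorem star_vec_one_dotProduct_kronecker_one_mulVec (A : Matrix n n R) :
    star (vec (1 : Matrix n n R)) ⬝ᵥ ((A ⊗ₖ (1 : Matrix n n R)) *ᵥ vec 1) = A.trace := by
  simp [kronecker_mulVec_vec, star_vec_dotProduct_vec]

end CommSemiring

end Matrix

theorem PhiMax_eq_vecMulVec (d : ℕ) :
    PhiMax d = vecMulVec (vec 1) (star (vec 1)) := by
  ext ⟨a, b⟩ ⟨c, e⟩
  simp only [PhiMax, vecMulVec_apply, one_apply, of_apply, vec, Pi.star_apply, eq_comm]
  split_ifs <;> simp_all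

/-- The maximum probability of simulating an ideal quantum channel (the identity channel)
from the future to the past is 1/d². -/
theorem identity_channel_sim_prob (d : ℕ) (hd : 1 ≤ d) (p : ℝ) (hp : 0 ≤ p) :
    (∃ ρ₀ : Matrix (Fin d) (Fin d) ℂ, ρ₀.PosSemidef ∧ ρ₀.trace = 1 ∧
        (ρ₀ ⊗ₖ (1 : Matrix (Fin d) (Fin d) ℂ) - (p : ℂ) • PhiMax d).PosSemidef)
      ↔ p ≤ 1 / (d : ℝ) ^ 2 := by
  have hd0 : (0 : ℝ) < d := by exact_mod_cast hd
  rw [PhiMax_eq_vecMulVec]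
  constructor
  · rintro ⟨ρ₀, -, htr, hM⟩
    have hquad := hM.dotProduct_mulVec_nonneg (vec 1)
    rw [sub_mulVec, dotProduct_sub, smul_mulVec, dotProduct_smul, smul_eq_mul,
      star_vec_one_dotProduct_kronecker_one_mulVec, star_dotProduct_vecMulVec_mulVec_self,
      star_vec_one_dotProduct_vec_one, htr, Fintype.card_fin] at hquad
    have hquad_real : (0 : ℝ) ≤ 1 - p * d ^ 2 := by exact_mod_cast hquad
    rw [le_div_iff₀ (by positivity)]
    linarith
  · intro hpd
    refine ⟨(d : ℂ)⁻¹ • 1, PosSemidef.one.smul (by positivity),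
      by simp [Nat.one_le_iff_ne_zero.mp hd], ?_⟩
    rw [smul_kronecker, one_kronecker_one]
    refine posSemidef_smul_one_sub_smul_vecMulVec (by exact_mod_cast hp) ?_
    have hpd' : p * d ≤ (d : ℝ)⁻¹ := calc
      p * d ≤ 1 / d ^ 2 * d := mul_le_mul_of_nonneg_right hpd hd0.le
      _ = (d : ℝ)⁻¹ := by field_simp
    rw [star_vec_one_dotProduct_vec_one, Fintype.card_fin]
    simpa using Complex.real_le_real.mpr hpd'
end

section
/- Let m, n ≥ 1 and let C be a positive semidefinite complex matrix indexed by Fin m × Fin n satisfying the channel normalization: for all g, g' ∈ Fin n, ∑_{f ∈ Fin m} C ((f,g),(f,g')) equals 1 if g = g' and 0 otherwise. Then there exists a density matrix ρ₀ on Fin m such that (ρ₀ ⊗ I_n) − max(1/n², 1/m²)·C is positive semidefinite. (Every quantum channel with n-dimensional input and m-dimensional output can be simulated from the future to the past with probability at least max(1/n², 1/m²).) -/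
/-!
For a positive semidefinite `C` on `α × β`, the block-diagonal pinching
`∑ g, (1 ⊗ |g⟩⟨g|) C (1 ⊗ |g⟩⟨g|)` dominates `C / |β|` (Cauchy–Schwarz over the `|β|` blocks)
and is dominated by `Tr_β C ⊗ 1`, so `C ≤ |β| • (Tr_β C ⊗ 1)`. With `β` the input, `Tr_β C`
has trace `n`, and `ρ₀ = Tr_β C / n` gives probability `1 / n²`. With the factors swapped,
the channel normalization says that the partial trace over the output is `1`, so `C ≤ m • 1`
and `ρ₀ = 1 / m` gives probability `1 / m²`.
-/

open Matrix
open scoped Kronecker ComplexOrder MatrixOrder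

namespace Matrix

variable {𝕜 ι α β m n R : Type*} [RCLike 𝕜]

section PartialTrace

variable [Fintype β]

def partialTraceRight [AddCommMonoid R] (C : Matrix (α × β) (α × β) R) : Matrix α α R :=
  of fun i j => ∑ k, C (i, k) (j, k)

theorem PosSemidef.partialTraceRight [Ring R] [PartialOrder R] [StarRing R] [AddLeftMono R]
    {C : Matrix (α × β) (α × β) R} (hC : C.PosSemidef) : (partialTraceRight C).PosSemidef := by
  have hsum : Matrix.partialTraceRight C = ∑ k, C.submatrix (·, k) (·, k) := by
    ext i j
    simp [Matrix.partialTraceRight, Matrix.sum_apply]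
  exact hsum ▸ posSemidef_sum _ fun k _ => hC.submatrix _

variable [Fintype α]

def partialTraceLeft [AddCommMonoid R] (C : Matrix (α × β) (α × β) R) : Matrix β β R :=
  of fun i j => ∑ k, C (k, i) (k, j)

theorem trace_partialTraceRight [AddCommMonoid R] (C : Matrix (α × β) (α × β) R) :
    (partialTraceRight C).trace = C.trace := by
  simp [trace, partialTraceRight, Fintype.sum_prod_type]

theorem trace_partialTraceLeft [AddCommMonoid R] (C : Matrix (α × β) (α × β) R) :
    (partialTraceLeft C).trace = C.trace := by
  simp [trace, partialTraceLeft, Fintype.sum_prod_type, Finset.sum_comm (γ := α)]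

end PartialTrace

theorem conjTranspose_sum_mul_mul_sum_le [Fintype m] [Fintype n] {C : Matrix n n 𝕜}
    (hC : C.PosSemidef) (s : Finset ι) (A : ι → Matrix n m 𝕜) :
    (∑ i ∈ s, A i)ᴴ * C * ∑ i ∈ s, A i ≤ s.card • ∑ i ∈ s, (A i)ᴴ * C * A i := by
  set B : ι → ι → Matrix m m 𝕜 := fun i j => (A i)ᴴ * C * A j
  have hexpand : (∑ i ∈ s, A i)ᴴ * C * ∑ i ∈ s, A i = ∑ i ∈ s, ∑ j ∈ s, B i j := by
    simp only [B, conjTranspose_sum, Matrix.sum_mul, Matrix.mul_sum]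
    exact Finset.sum_comm
  have hdiff : ∀ i j, (A i - A j)ᴴ * C * (A i - A j) = (B i i + B j j) - (B i j + B j i) := by
    intro i j
    simp only [B, conjTranspose_sub, Matrix.sub_mul, Matrix.mul_sub]
    abel
  -- the gap between the two sides is half of `∑ᵢ ∑ⱼ (Aᵢ - Aⱼ)ᴴ C (Aᵢ - Aⱼ) ≥ 0`
  have hsum : ∑ i ∈ s, ∑ j ∈ s, (A i - A j)ᴴ * C * (A i - A j) =
      (2 : ℝ) • (s.card • ∑ i ∈ s, B i i - ∑ i ∈ s, ∑ j ∈ s, B i j) := by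
    simp only [hdiff, Finset.sum_sub_distrib, Finset.sum_add_distrib, Finset.sum_const]
    rw [Finset.sum_comm (f := fun i j => B j i), ← Finset.smul_sum]
    module
  have hnonneg : 0 ≤ ∑ i ∈ s, ∑ j ∈ s, (A i - A j)ᴴ * C * (A i - A j) :=
    (posSemidef_sum _ fun i _ => posSemidef_sum _ fun j _ =>
      hC.conjTranspose_mul_mul_same _).nonneg
  have := smul_nonneg (show (0 : ℝ) ≤ 2⁻¹ by norm_num) (hsum ▸ hnonneg)
  rwa [smul_smul, inv_mul_cancel₀ two_ne_zero, one_smul, sub_nonneg, ← hexpand] at this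

section Kronecker

variable [Fintype β] [DecidableEq α] [DecidableEq β]

theorem sum_one_kronecker_single_self :
    ∑ g, (1 : Matrix α α 𝕜) ⊗ₖ single g g (1 : 𝕜) = (1 : Matrix (α × β) (α × β) 𝕜) := by
  ext ⟨i, a⟩ ⟨j, b⟩
  by_cases hab : a = b <;> simp [Matrix.sum_apply, one_apply, single_apply, ite_and, hab]

variable [Fintype α]

theorem partialTraceRight_kronecker_one (C : Matrix (α × β) (α × β) 𝕜) :
    partialTraceRight C ⊗ₖ (1 : Matrix β β 𝕜) =
      ∑ g, ∑ h, (1 ⊗ₖ single h g 1)ᴴ * C * (1 ⊗ₖ single h g (1 : 𝕜)) := by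
  ext ⟨i, a⟩ ⟨j, b⟩
  simp [partialTraceRight, Matrix.sum_apply, mul_apply, one_apply, single_apply,
    Fintype.sum_prod_type, conjTranspose_kronecker, ite_and, Finset.sum_ite_irrel,
    eq_comm (a := a)]

theorem PosSemidef.le_card_smul_partialTraceRight_kronecker_one
    {C : Matrix (α × β) (α × β) 𝕜} (hC : C.PosSemidef) :
    C ≤ Fintype.card β • (Matrix.partialTraceRight C ⊗ₖ (1 : Matrix β β 𝕜)) := by
  calc C = (∑ g, 1 ⊗ₖ single g g 1)ᴴ * C * ∑ g, 1 ⊗ₖ single g g (1 : 𝕜) := by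
        rw [sum_one_kronecker_single_self, conjTranspose_one, Matrix.one_mul, Matrix.mul_one]
    _ ≤ Fintype.card β • ∑ g, (1 ⊗ₖ single g g 1)ᴴ * C * (1 ⊗ₖ single g g (1 : 𝕜)) :=
        conjTranspose_sum_mul_mul_sum_le hC _ _
    _ ≤ Fintype.card β • ∑ g, ∑ h, (1 ⊗ₖ single h g 1)ᴴ * C * (1 ⊗ₖ single h g (1 : 𝕜)) := by
        gcongr with g
        exact Finset.single_le_sum (f := fun h => (1 ⊗ₖ single h g 1)ᴴ * C * (1 ⊗ₖ single h g 1))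
          (fun h _ => (hC.conjTranspose_mul_mul_same _).nonneg) (Finset.mem_univ g)
    _ = _ := by rw [partialTraceRight_kronecker_one]

theorem PosSemidef.le_card_smul_one_kronecker_partialTraceLeft
    {C : Matrix (α × β) (α × β) 𝕜} (hC : C.PosSemidef) :
    C ≤ Fintype.card α • ((1 : Matrix α α 𝕜) ⊗ₖ partialTraceLeft C) := by
  let e : β × α ≃ α × β := .prodComm β α
  have h := (le_iff.mp
    (le_card_smul_partialTraceRight_kronecker_one (hC.submatrix e))).submatrix e.symm
  rw [le_iff]
  convert h using 1
  ext ⟨i, a⟩ ⟨j, b⟩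
  simp only [e, Matrix.sub_apply, Matrix.smul_apply, submatrix_apply, kroneckerMap_apply,
    Equiv.prodComm_symm, Equiv.prodComm_apply, Prod.swap_prod_mk, partialTraceLeft,
    Matrix.partialTraceRight, of_apply, mul_comm]

theorem PosSemidef.inv_sq_smul_le_inv_smul_partialTraceRight_kronecker_one
    {C : Matrix (α × β) (α × β) 𝕜} (hC : C.PosSemidef) :
    ((Fintype.card β : ℝ) ^ 2)⁻¹ • C ≤
      ((Fintype.card β : ℝ)⁻¹ • Matrix.partialTraceRight C) ⊗ₖ (1 : Matrix β β 𝕜) := by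
  calc _ ≤ ((Fintype.card β : ℝ) ^ 2)⁻¹ •
        Fintype.card β • (Matrix.partialTraceRight C ⊗ₖ (1 : Matrix β β 𝕜)) :=
        smul_le_smul_of_nonneg_left hC.le_card_smul_partialTraceRight_kronecker_one
          (by positivity)
    _ = _ := by
        rw [smul_kronecker, ← Nat.cast_smul_eq_nsmul ℝ, smul_smul, ← div_eq_inv_mul, sq,
          div_self_mul_self']

theorem PosSemidef.inv_sq_smul_le_of_partialTraceLeft_eq_one
    {C : Matrix (α × β) (α × β) 𝕜} (hC : C.PosSemidef) (hC₁ : partialTraceLeft C = 1) :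
    ((Fintype.card α : ℝ) ^ 2)⁻¹ • C ≤
      ((Fintype.card α : ℝ)⁻¹ • (1 : Matrix α α 𝕜)) ⊗ₖ (1 : Matrix β β 𝕜) := by
  calc _ ≤ ((Fintype.card α : ℝ) ^ 2)⁻¹ •
        Fintype.card α • ((1 : Matrix α α 𝕜) ⊗ₖ partialTraceLeft C) :=
        smul_le_smul_of_nonneg_left hC.le_card_smul_one_kronecker_partialTraceLeft
          (by positivity)
    _ = _ := by
        rw [hC₁, smul_kronecker, ← Nat.cast_smul_eq_nsmul ℝ, smul_smul, ← div_eq_inv_mul, sq,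
          div_self_mul_self']

end Kronecker

end Matrix

theorem general_channel_sim_lower_bound_general (m n : ℕ) (hm : 1 ≤ m)
    (C : Matrix (Fin m × Fin n) (Fin m × Fin n) ℂ) (hC : C.PosSemidef)
    (hTr : ∀ g g' : Fin n, ∑ f : Fin m, C (f, g) (f, g') = if g = g' then 1 else 0) :
    ∃ ρ₀ : Matrix (Fin m) (Fin m) ℂ, ρ₀.PosSemidef ∧ ρ₀.trace = 1 ∧
      (ρ₀ ⊗ₖ (1 : Matrix (Fin n) (Fin n) ℂ) -
        ((max (1 / (n : ℝ) ^ 2) (1 / (m : ℝ) ^ 2) : ℝ) : ℂ) • C).PosSemidef := by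
  have hC₁ : partialTraceLeft C = 1 := by
    ext g g'
    simpa [partialTraceLeft, one_apply] using hTr g g'
  have htrace : C.trace = n := by
    rw [← trace_partialTraceLeft, hC₁, trace_one, Fintype.card_fin]
  simp only [Complex.coe_smul, one_div, ← le_iff]
  rcases le_total ((m : ℝ) ^ 2)⁻¹ ((n : ℝ) ^ 2)⁻¹ with hle | hle
  · have hn : n ≠ 0 := by
      rintro rfl
      simp_all
    refine ⟨(n : ℝ)⁻¹ • partialTraceRight C, hC.partialTraceRight.smul (by positivity), ?_, ?_⟩
    · simp [trace_smul, trace_partialTraceRight, htrace, hn]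
    · simpa [max_eq_left hle] using hC.inv_sq_smul_le_inv_smul_partialTraceRight_kronecker_one
  · refine ⟨(m : ℝ)⁻¹ • 1, PosSemidef.one.smul (by positivity), ?_, ?_⟩
    · have hm₀ : (m : ℂ) ≠ 0 := by exact_mod_cast (by omega : m ≠ 0)
      simp [trace_smul, hm₀]
    · simpa [max_eq_right hle] using hC.inv_sq_smul_le_of_partialTraceLeft_eq_one hC₁

/-- Every quantum channel with n-dimensional input and m-dimensional output can be
simulated from the future to the past with probability at least max(1/n², 1/m²). -/
theorem general_channel_sim_lower_bound (m n : ℕ) (hm : 1 ≤ m) (hn : 1 ≤ n)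
    (C : Matrix (Fin m × Fin n) (Fin m × Fin n) ℂ) (hC : C.PosSemidef)
    (hTr : ∀ g g' : Fin n, ∑ f : Fin m, C (f, g) (f, g') = if g = g' then 1 else 0) :
    ∃ ρ₀ : Matrix (Fin m) (Fin m) ℂ, ρ₀.PosSemidef ∧ ρ₀.trace = 1 ∧
      (ρ₀ ⊗ₖ (1 : Matrix (Fin n) (Fin n) ℂ) -
        ((max (1 / (n : ℝ) ^ 2) (1 / (m : ℝ) ^ 2) : ℝ) : ℂ) • C).PosSemidef :=
  general_channel_sim_lower_bound_general m n hm C hC hTr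
end

section
/- Let d ≥ 1 and let Φ_d be the matrix indexed by Fin d × Fin d whose entry at row (a,b), column (c,e) is 1 if a = b and c = e, and 0 otherwise. Let C_est := (1/d)·Φ_d + (1/(d+1))·(I_{d²} − Φ_d/d) be the Choi matrix of the optimal pure-state estimation channel. For a real number p ≥ 0, there exists a density matrix ρ₀ on Fin d such that (ρ₀ ⊗ I_d) − p·C_est is positive semidefinite if and only if p ≤ 1/d. (The maximum probability of simulating the optimal pure-state estimation channel from the future to the past is 1/d.) -/
open Matrix
open scoped Kronecker ComplexOrder

/-- The Choi matrix of the optimal pure-state estimation channel. -/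
noncomputable def Cest (d : ℕ) : Matrix (Fin d × Fin d) (Fin d × Fin d) ℂ :=
  (1 / (d : ℂ)) • PhiMax d +
    (1 / ((d : ℂ) + 1)) •
      ((1 : Matrix (Fin d × Fin d) (Fin d × Fin d) ℂ) - (1 / (d : ℂ)) • PhiMax d)

/-- The vector `|I⟩⟩ = ∑ i, e_i ⊗ e_i`. -/
def maxEntVec (n R : Type*) [DecidableEq n] [Zero R] [One R] : n × n → R :=
  fun q => if q.1 = q.2 then 1 else 0

section maxEntVec

variable {n R : Type*} [DecidableEq n] [NonAssocSemiring R]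

lemma star_maxEntVec [StarRing R] : star (maxEntVec n R) = maxEntVec n R := by
  ext q
  simp [maxEntVec, apply_ite star]

variable [Fintype n]

lemma maxEntVec_dotProduct_self :
    maxEntVec n R ⬝ᵥ maxEntVec n R = Fintype.card n := by
  simp [maxEntVec, dotProduct, Fintype.sum_prod_type]

lemma maxEntVec_dotProduct_kronecker_one_mulVec (A : Matrix n n R) :
    maxEntVec n R ⬝ᵥ (A ⊗ₖ (1 : Matrix n n R)) *ᵥ maxEntVec n R = A.trace := by
  simp [maxEntVec, dotProduct, mulVec, Fintype.sum_prod_type, one_apply, trace]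

end maxEntVec

lemma phiMax_eq_vecMulVec (d : ℕ) :
    PhiMax d = vecMulVec (maxEntVec (Fin d) ℂ) (star (maxEntVec (Fin d) ℂ)) := by
  ext p q
  simp only [PhiMax, of_apply, vecMulVec_apply, star_maxEntVec, maxEntVec, ite_zero_mul_ite_zero,
    mul_one]

lemma phiMax_mulVec_maxEntVec (d : ℕ) :
    PhiMax d *ᵥ maxEntVec (Fin d) ℂ = (d : ℂ) • maxEntVec (Fin d) ℂ := by
  rw [phiMax_eq_vecMulVec, vecMulVec_mulVec, star_maxEntVec, maxEntVec_dotProduct_self,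
    Fintype.card_fin, op_smul_eq_smul]

lemma phiMax_mul_self (d : ℕ) : PhiMax d * PhiMax d = (d : ℂ) • PhiMax d := by
  rw [phiMax_eq_vecMulVec, vecMulVec_mul_vecMulVec, star_maxEntVec, maxEntVec_dotProduct_self,
    Fintype.card_fin, vecMulVec_smul]

lemma isStarProjection_inv_smul_phiMax {d : ℕ} (hd : d ≠ 0) :
    IsStarProjection ((d : ℂ)⁻¹ • PhiMax d) := by
  have hdC : (d : ℂ) ≠ 0 := Nat.cast_ne_zero.mpr hd
  refine ⟨?_, ?_⟩
  · rw [IsIdempotentElem, smul_mul_smul_comm, phiMax_mul_self, smul_smul, mul_assoc,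
      inv_mul_cancel₀ hdC, mul_one]
  · rw [phiMax_eq_vecMulVec]
    exact .smul (by simp) (posSemidef_vecMulVec_self_star _).isHermitian

lemma cest_mulVec_maxEntVec {d : ℕ} (hd : d ≠ 0) :
    Cest d *ᵥ maxEntVec (Fin d) ℂ = maxEntVec (Fin d) ℂ := by
  have hP : ((d : ℂ)⁻¹ • PhiMax d) *ᵥ maxEntVec (Fin d) ℂ = maxEntVec (Fin d) ℂ := by
    rw [smul_mulVec, phiMax_mulVec_maxEntVec, smul_smul, inv_mul_cancel₀ (by exact_mod_cast hd),
      one_smul]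
  simp only [Cest, one_div, add_mulVec, smul_mulVec, sub_mulVec, one_mulVec, hP, sub_self,
    smul_zero, add_zero]

lemma mul_le_trace_of_posSemidef_kronecker_one_sub_smul_cest {d : ℕ} (hd : d ≠ 0)
    {ρ : Matrix (Fin d) (Fin d) ℂ} {c : ℂ}
    (h : (ρ ⊗ₖ (1 : Matrix (Fin d) (Fin d) ℂ) - c • Cest d).PosSemidef) :
    c * d ≤ ρ.trace := by
  have := h.dotProduct_mulVec_nonneg (maxEntVec (Fin d) ℂ)
  rwa [star_maxEntVec, sub_mulVec, dotProduct_sub, maxEntVec_dotProduct_kronecker_one_mulVec,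
    smul_mulVec, cest_mulVec_maxEntVec hd, dotProduct_smul, maxEntVec_dotProduct_self,
    Fintype.card_fin, smul_eq_mul, sub_nonneg] at this

lemma maxMixed_kronecker_one_sub_smul_cest (d : ℕ) (c : ℂ) :
    ((d : ℂ)⁻¹ • (1 : Matrix (Fin d) (Fin d) ℂ)) ⊗ₖ (1 : Matrix (Fin d) (Fin d) ℂ) -
        c • Cest d =
      ((d : ℂ)⁻¹ - c) • ((d : ℂ)⁻¹ • PhiMax d) +
        ((d : ℂ)⁻¹ - c / (d + 1)) • (1 - (d : ℂ)⁻¹ • PhiMax d) := by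
  rw [smul_kronecker, one_kronecker_one, Cest]
  module

open scoped MatrixOrder in
lemma posSemidef_maxMixed_kronecker_one_sub_smul_cest {d : ℕ} (hd : d ≠ 0) {c : ℝ}
    (hc : c * d ≤ 1) :
    (((d : ℂ)⁻¹ • (1 : Matrix (Fin d) (Fin d) ℂ)) ⊗ₖ (1 : Matrix (Fin d) (Fin d) ℂ) -
      (c : ℂ) • Cest d).PosSemidef := by
  have hP := isStarProjection_inv_smul_phiMax hd
  have hc₁ : c ≤ (d : ℝ)⁻¹ := by
    rwa [← one_div, le_div_iff₀ (by positivity)]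
  have hc₂ : c / (d + 1) ≤ (d : ℝ)⁻¹ :=
    calc c / (d + 1) ≤ (d : ℝ)⁻¹ / (d + 1) := by gcongr
      _ ≤ (d : ℝ)⁻¹ := div_le_self (by positivity) (by simp)
  rw [maxMixed_kronecker_one_sub_smul_cest]
  refine (hP.nonneg.posSemidef.smul ?_).add (hP.one_sub_nonneg.posSemidef.smul ?_)
  · simpa using Complex.zero_le_real.mpr (sub_nonneg.mpr hc₁)
  · simpa using Complex.zero_le_real.mpr (sub_nonneg.mpr hc₂)

theorem estimation_channel_sim_prob_general (d : ℕ) (hd : 1 ≤ d) (p : ℝ) :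
    (∃ ρ₀ : Matrix (Fin d) (Fin d) ℂ, ρ₀.PosSemidef ∧ ρ₀.trace = 1 ∧
        (ρ₀ ⊗ₖ (1 : Matrix (Fin d) (Fin d) ℂ) - (p : ℂ) • Cest d).PosSemidef)
      ↔ p ≤ 1 / d := by
  have hd₀ : d ≠ 0 := by omega
  rw [le_div_iff₀ (by positivity)]
  constructor
  · rintro ⟨ρ₀, -, htr, hsim⟩
    have := mul_le_trace_of_posSemidef_kronecker_one_sub_smul_cest hd₀ hsim
    rw [htr] at this
    exact_mod_cast this
  · intro hp
    refine ⟨(d : ℂ)⁻¹ • 1, PosSemidef.one.smul (by simp), ?_,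
      posSemidef_maxMixed_kronecker_one_sub_smul_cest hd₀ hp⟩
    simp [trace_smul, hd₀]

/-- The maximum probability of simulating the optimal pure-state estimation channel
from the future to the past is 1/d. -/
theorem estimation_channel_sim_prob (d : ℕ) (hd : 1 ≤ d) (p : ℝ) (hp : 0 ≤ p) :
    (∃ ρ₀ : Matrix (Fin d) (Fin d) ℂ, ρ₀.PosSemidef ∧ ρ₀.trace = 1 ∧
        (ρ₀ ⊗ₖ (1 : Matrix (Fin d) (Fin d) ℂ) - (p : ℂ) • Cest d).PosSemidef)
      ↔ p ≤ 1 / d :=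
  estimation_channel_sim_prob_general d hd p
end

section
/- Let d ≥ 2 and let Φ_d be the matrix indexed by Fin d × Fin d whose entry at row (a,b), column (c,e) is 1 if a = b and c = e, and 0 otherwise. Let C_NOT := (d/(d²−1))·(I_{d²} − Φ_d/d) be the Choi matrix of the universal NOT channel. For a real number p ≥ 0, there exists a density matrix ρ₀ on Fin d such that (ρ₀ ⊗ I_d) − p·C_NOT is positive semidefinite if and only if p ≤ 1 − 1/d². (The maximum probability of simulating the universal NOT channel from the future to the past is 1 − 1/d².) -/
open Matrix
open scoped Kronecker ComplexOrder

/-- The Choi matrix of the universal NOT channel. -/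
noncomputable def CUNOT (d : ℕ) : Matrix (Fin d × Fin d) (Fin d × Fin d) ℂ :=
  ((d : ℂ) / ((d : ℂ) ^ 2 - 1)) •
    ((1 : Matrix (Fin d × Fin d) (Fin d × Fin d) ℂ) - (1 / (d : ℂ)) • PhiMax d)

lemma phiMax_eq_vecMulVec_s8 (d : ℕ) :
    PhiMax d = vecMulVec (fun q : Fin d × Fin d => if q.1 = q.2 then 1 else 0)
      (star fun q : Fin d × Fin d => if q.1 = q.2 then 1 else 0) := by
  ext p q
  by_cases h₁ : p.1 = p.2 <;> by_cases h₂ : q.1 = q.2 <;> simp [PhiMax, vecMulVec_apply, h₁, h₂]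

lemma phiMax_posSemidef (d : ℕ) : (PhiMax d).PosSemidef :=
  phiMax_eq_vecMulVec_s8 d ▸ posSemidef_vecMulVec_self_star _

lemma CUNOT_apply_of_ne {d : ℕ} {a b : Fin d} (h : a ≠ b) :
    CUNOT d (a, b) (a, b) = d / (d ^ 2 - 1) := by
  simp [CUNOT, PhiMax, h]

lemma smul_one_kronecker_one_sub_smul_CUNOT {d : ℕ} (hd : d ≠ 0) (c p : ℂ) :
    (c • 1 : Matrix (Fin d) (Fin d) ℂ) ⊗ₖ (1 : Matrix (Fin d) (Fin d) ℂ) - p • CUNOT d =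
      (c - p * (d / (d ^ 2 - 1))) • 1 + (p / (d ^ 2 - 1)) • PhiMax d := by
  have hd' : (d : ℂ) ≠ 0 := Nat.cast_ne_zero.mpr hd
  rw [smul_kronecker, one_kronecker_one, CUNOT, smul_sub, smul_sub, smul_smul, smul_smul,
    smul_smul, sub_smul]
  field_simp
  abel

lemma le_one_sub_one_div_sq_iff {x p : ℝ} (hx : 1 < x) :
    p ≤ 1 - 1 / x ^ 2 ↔ p * (x / (x ^ 2 - 1)) ≤ 1 / x := by
  have hx0 : 0 < x := by linarith
  have hx2 : 0 < x ^ 2 - 1 := by nlinarith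
  rw [← le_div_iff₀ (by positivity)]
  field_simp

lemma mul_le_diag_of_kronecker_one_sub_smul_CUNOT_posSemidef {d : ℕ} (hd : 2 ≤ d)
    {ρ : Matrix (Fin d) (Fin d) ℂ} {p : ℂ}
    (h : (ρ ⊗ₖ (1 : Matrix (Fin d) (Fin d) ℂ) - p • CUNOT d).PosSemidef) (a : Fin d) :
    p * (d / (d ^ 2 - 1)) ≤ ρ a a := by
  have := Fin.nontrivial_iff_two_le.mpr hd
  obtain ⟨b, hba⟩ := exists_ne a
  have hab := h.diag_nonneg (i := (a, b))
  simpa [kroneckerMap_apply, CUNOT_apply_of_ne hba.symm, hba.symm, sub_nonneg] using hab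

lemma mul_le_trace_of_kronecker_one_sub_smul_CUNOT_posSemidef {d : ℕ} (hd : 2 ≤ d)
    {ρ : Matrix (Fin d) (Fin d) ℂ} {p : ℂ}
    (h : (ρ ⊗ₖ (1 : Matrix (Fin d) (Fin d) ℂ) - p • CUNOT d).PosSemidef) :
    d * (p * (d / (d ^ 2 - 1))) ≤ ρ.trace := by
  simpa [trace] using Finset.sum_le_sum (s := Finset.univ) fun a _ =>
    mul_le_diag_of_kronecker_one_sub_smul_CUNOT_posSemidef hd h a

/-- The maximum probability of simulating the universal NOT channel from the future to
the past is 1 - 1/d². -/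
theorem unot_channel_sim_prob (d : ℕ) (hd : 2 ≤ d) (p : ℝ) (hp : 0 ≤ p) :
    (∃ ρ₀ : Matrix (Fin d) (Fin d) ℂ, ρ₀.PosSemidef ∧ ρ₀.trace = 1 ∧
        (ρ₀ ⊗ₖ (1 : Matrix (Fin d) (Fin d) ℂ) - (p : ℂ) • CUNOT d).PosSemidef)
      ↔ p ≤ 1 - 1 / (d : ℝ) ^ 2 := by
  have hd₁ : (1 : ℝ) < d := by exact_mod_cast hd
  have hd₀ : (0 : ℝ) < d := by linarith
  rw [le_one_sub_one_div_sq_iff hd₁]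
  constructor
  · rintro ⟨ρ₀, -, htr, h⟩
    have hle := mul_le_trace_of_kronecker_one_sub_smul_CUNOT_posSemidef hd h
    rw [htr] at hle
    have hle' : (d : ℝ) * (p * (d / (d ^ 2 - 1))) ≤ 1 := by exact_mod_cast hle
    rw [le_div_iff₀ hd₀]
    linarith
  · intro h
    refine ⟨((1 / d : ℝ) : ℂ) • 1, PosSemidef.one.smul (by positivity), ?_, ?_⟩
    · simp [show (d : ℂ) ≠ 0 by exact_mod_cast hd₀.ne']
    · rw [smul_one_kronecker_one_sub_smul_CUNOT (by omega)]
      refine (PosSemidef.one.smul ?_).add ((phiMax_posSemidef d).smul ?_)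
      · exact_mod_cast sub_nonneg.mpr h
      · have : (0 : ℝ) ≤ p / (d ^ 2 - 1) := div_nonneg hp (by nlinarith)
        exact_mod_cast this
end

section
/- Let d ≥ 1 and let C be the complex matrix indexed by Fin d × (Fin d × Fin d) with entries C ((a,(b,c)), (a',(b',c'))) = (1/2)·(δ_{a b}·δ_{a' b'}·δ_{c c'} + δ_{a c}·δ_{a' c'}·δ_{b b'}), i.e. C = (1/2)(|I⟩⟩⟨⟨I|_{01} ⊗ I_2 + |I⟩⟩⟨⟨I|_{02} ⊗ I_1), the Choi matrix of the symmetrized partial trace channel from two d-dimensional systems to one. For a real number p ≥ 0, there exists a density matrix ρ₀ on Fin d such that (ρ₀ ⊗ I_{d²}) − p·C is positive semidefinite if and only if p ≤ 2/(d(d+1)). (The maximum probability of teleporting one copy of a state from two input copies in the future to the past is 2/(d(d+1)).) -/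
open Matrix
open scoped Kronecker ComplexOrder

/-- The Choi matrix of the symmetrized partial trace channel from two d-dimensional
systems to one: C = (1/2)(|I⟩⟩⟨⟨I|_{01} ⊗ I_2 + |I⟩⟩⟨⟨I|_{02} ⊗ I_1). -/
noncomputable def Ctrace21 (d : ℕ) :
    Matrix (Fin d × (Fin d × Fin d)) (Fin d × (Fin d × Fin d)) ℂ :=
  Matrix.of fun p q =>
    (1 / 2) *
      ((if p.1 = p.2.1 then 1 else 0) * (if q.1 = q.2.1 then 1 else 0) *
          (if p.2.2 = q.2.2 then 1 else 0) +
        (if p.1 = p.2.2 then 1 else 0) * (if q.1 = q.2.2 then 1 else 0) *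
          (if p.2.1 = q.2.1 then 1 else 0))

/-!
Write `C = (A + B) / 2` with `A = |I⟩⟩⟨⟨I|_{01} ⊗ I_2` and `B = |I⟩⟩⟨⟨I|_{02} ⊗ I_1`. The relations
`A² = dA`, `B² = dB`, `ABA = A`, `BAB = B` force `A + B` to be annihilated by
`X (X - (d - 1)) (X - (d + 1))`, so the spectrum of `A + B` lies in `{0, d - 1, d + 1}` and the
maximally mixed `ρ₀ = I / d` works as soon as `p (d + 1) / 2 ≤ 1 / d`. Conversely, for any `ρ₀`
the vectors `w_c = |I⟩⟩_{01} |c⟩_2 + |I⟩⟩_{02} |c⟩_1` satisfy `⟨w_c, C w_c⟩ = (d + 1)²` and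
`⟨w_c, (ρ₀ ⊗ I) w_c⟩ = 2 tr ρ₀ + 2 (ρ₀)_{cc}`; summing the positivity of
`ρ₀ ⊗ I - p C` on these vectors over `c` gives `d p (d + 1)² ≤ 2 (d + 1)`.
-/

section Spectrum

variable {𝕜 n : Type*} [RCLike 𝕜] [Fintype n] [DecidableEq n] {A : Matrix n n 𝕜}

theorem Matrix.IsHermitian.posSemidef_smul_one_sub_smul (hA : A.IsHermitian) {c t : ℝ}
    (h : ∀ i, 0 ≤ c - t * hA.eigenvalues i) : ((c : 𝕜) • 1 - (t : 𝕜) • A).PosSemidef := by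
  set U : Matrix n n 𝕜 := ↑hA.eigenvectorUnitary
  have hU : U * star U = 1 := Unitary.mul_star_self_of_mem hA.eigenvectorUnitary.2
  have hD : diagonal (fun i => ((c - t * hA.eigenvalues i : ℝ) : 𝕜))
      = (c : 𝕜) • 1 - (t : 𝕜) • diagonal (RCLike.ofReal ∘ hA.eigenvalues) := by
    ext i j
    rcases eq_or_ne i j with rfl | hij
    · simp only [diagonal_apply_eq, sub_apply, smul_apply, one_apply_eq, Function.comp_apply,
        RCLike.ofReal_sub, RCLike.ofReal_mul, smul_eq_mul, mul_one]
    · simp [hij]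
  have hconj : (c : 𝕜) • 1 - (t : 𝕜) • A
      = U * diagonal (fun i => ((c - t * hA.eigenvalues i : ℝ) : 𝕜)) * star U := by
    conv_lhs => rw [hA.spectral_theorem, Unitary.conjStarAlgAut_apply]
    simp only [hD, mul_sub, sub_mul, Matrix.mul_smul, Matrix.smul_mul, mul_one, hU]
    rfl
  rw [hconj, Unitary.isUnit_coe.posSemidef_star_right_conjugate_iff, posSemidef_diagonal_iff]
  exact fun i => RCLike.ofReal_nonneg.2 (h i)

theorem Matrix.IsHermitian.eigenvalues_mem_of_mul_sub_mul_sub_eq_zero (hA : A.IsHermitian)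
    {a b : ℝ} (h : A * (A - (a : 𝕜) • 1) * (A - (b : 𝕜) • 1) = 0) (i : n) :
    hA.eigenvalues i = 0 ∨ hA.eigenvalues i = a ∨ hA.eigenvalues i = b := by
  set μ := hA.eigenvalues i
  set v : n → 𝕜 := ⇑(hA.eigenvectorBasis i)
  have hv : v ≠ 0 := fun hv0 => hA.eigenvectorBasis.orthonormal.ne_zero i (by
    simpa [v] using congrArg (WithLp.toLp 2) hv0)
  have hAv : A *ᵥ v = (μ : 𝕜) • v := by
    rw [hA.mulVec_eigenvectorBasis, RCLike.real_smul_eq_coe_smul (K := 𝕜)]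
  have hroot : ((μ * (μ - a) * (μ - b) : ℝ) : 𝕜) • v = 0 := by
    have hmul := congrArg (· *ᵥ v) h
    simp only [← mulVec_mulVec, sub_mulVec, smul_mulVec, one_mulVec, hAv, mulVec_sub,
      mulVec_smul, zero_mulVec] at hmul
    rw [← hmul]
    push_cast
    module
  have hroot' := (smul_eq_zero.1 hroot).resolve_right hv
  norm_cast at hroot'
  simpa [sub_eq_zero, or_assoc] using hroot'

end Spectrum

theorem add_mul_sub_mul_sub_eq_zero {K R : Type*} [CommRing K] [Ring R] [Algebra K R]
    {A B : R} {d : K} (hAA : A * A = d • A) (hBB : B * B = d • B)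
    (hABA : A * B * A = A) (hBAB : B * A * B = B) :
    (A + B) * (A + B - (d - 1) • 1) * (A + B - (d + 1) • 1) = 0 := by
  have hsq : (A + B) * (A + B) = d • (A + B) + (A * B + B * A) := by
    simp only [add_mul, mul_add, hAA, hBB, smul_add]
    abel
  have hcross : (A + B) * (A * B + B * A) = d • (A * B + B * A) + (A + B) := by
    simp only [add_mul, mul_add, ← mul_assoc, hAA, hBB, hABA, hBAB, smul_mul_assoc, smul_add]
    abel
  calc (A + B) * (A + B - (d - 1) • 1) * (A + B - (d + 1) • 1)
      = (A + B) * ((A + B) * (A + B)) - (2 * d) • ((A + B) * (A + B))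
          + (d ^ 2 - 1) • (A + B) := by
        simp only [mul_sub, sub_mul, mul_smul_comm, smul_mul_assoc, mul_one, mul_assoc]
        module
    _ = 0 := by
        rw [hsq, mul_add, mul_smul_comm, hsq, hcross]
        module

/-- `|I⟩⟩⟨⟨I|_{01} ⊗ I_2`. -/
noncomputable def ketBraI01 (d : ℕ) :
    Matrix (Fin d × (Fin d × Fin d)) (Fin d × (Fin d × Fin d)) ℂ :=
  Matrix.of fun p q => (if p.1 = p.2.1 then 1 else 0) * (if q.1 = q.2.1 then 1 else 0) *
    (if p.2.2 = q.2.2 then 1 else 0)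

/-- `|I⟩⟩⟨⟨I|_{02} ⊗ I_1`. -/
noncomputable def ketBraI02 (d : ℕ) :
    Matrix (Fin d × (Fin d × Fin d)) (Fin d × (Fin d × Fin d)) ℂ :=
  Matrix.of fun p q => (if p.1 = p.2.2 then 1 else 0) * (if q.1 = q.2.2 then 1 else 0) *
    (if p.2.1 = q.2.1 then 1 else 0)

theorem Ctrace21_eq_smul_add (d : ℕ) : Ctrace21 d = (2 : ℂ)⁻¹ • (ketBraI01 d + ketBraI02 d) := by
  ext p q
  simp [Ctrace21, ketBraI01, ketBraI02]

section ketBraI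

variable (d : ℕ)

theorem isHermitian_ketBraI01 : (ketBraI01 d).IsHermitian := by
  ext p q
  simp only [ketBraI01, conjTranspose_apply, of_apply]
  split_ifs <;> simp_all [eq_comm]

theorem isHermitian_ketBraI02 : (ketBraI02 d).IsHermitian := by
  ext p q
  simp only [ketBraI02, conjTranspose_apply, of_apply]
  split_ifs <;> simp_all [eq_comm]

theorem ketBraI01_mul_self : ketBraI01 d * ketBraI01 d = (d : ℂ) • ketBraI01 d := by
  ext p q
  simp [ketBraI01, mul_apply, Fintype.sum_prod_type, mul_ite]
  split_ifs <;> rfl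

theorem ketBraI02_mul_self : ketBraI02 d * ketBraI02 d = (d : ℂ) • ketBraI02 d := by
  ext p q
  simp [ketBraI02, mul_apply, Fintype.sum_prod_type, mul_ite]
  split_ifs <;> rfl

theorem ketBraI01_mul_ketBraI02_mul_ketBraI01 :
    ketBraI01 d * ketBraI02 d * ketBraI01 d = ketBraI01 d := by
  ext p q
  simp [ketBraI01, ketBraI02, mul_apply, Fintype.sum_prod_type, mul_ite]
  split_ifs <;> simp_all

theorem ketBraI02_mul_ketBraI01_mul_ketBraI02 :
    ketBraI02 d * ketBraI01 d * ketBraI02 d = ketBraI02 d := by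
  ext p q
  simp [ketBraI01, ketBraI02, mul_apply, Fintype.sum_prod_type, mul_ite]
  split_ifs <;> simp_all

theorem eigenvalues_ketBraI01_add_ketBraI02 (hR : (ketBraI01 d + ketBraI02 d).IsHermitian)
    (i : Fin d × (Fin d × Fin d)) :
    hR.eigenvalues i = 0 ∨ hR.eigenvalues i = d - 1 ∨ hR.eigenvalues i = d + 1 := by
  refine hR.eigenvalues_mem_of_mul_sub_mul_sub_eq_zero ?_ i
  push_cast
  exact add_mul_sub_mul_sub_eq_zero (ketBraI01_mul_self d) (ketBraI02_mul_self d)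
    (ketBraI01_mul_ketBraI02_mul_ketBraI01 d) (ketBraI02_mul_ketBraI01_mul_ketBraI02 d)

end ketBraI

/-- `|I⟩⟩_{01} ⊗ |c⟩_2 + |I⟩⟩_{02} ⊗ |c⟩_1`. -/
noncomputable def testVector (d : ℕ) (c : Fin d) : Fin d × (Fin d × Fin d) → ℂ :=
  fun q => (if q.1 = q.2.1 then 1 else 0) * (if q.2.2 = c then 1 else 0) +
    (if q.1 = q.2.2 then 1 else 0) * (if q.2.1 = c then 1 else 0)

theorem star_testVector_dotProduct_Ctrace21_mulVec (d : ℕ) (c : Fin d) :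
    star (testVector d c) ⬝ᵥ (Ctrace21 d *ᵥ testVector d c) = ((d : ℂ) + 1) ^ 2 := by
  simp [testVector, Ctrace21, dotProduct, mulVec, Fintype.sum_prod_type, mul_add, add_mul,
    ite_mul, mul_ite, Finset.sum_add_distrib, apply_ite (starRingEnd ℂ)]
  ring

theorem star_testVector_dotProduct_kronecker_one_mulVec (d : ℕ) (c : Fin d)
    (ρ : Matrix (Fin d) (Fin d) ℂ) :
    star (testVector d c) ⬝ᵥ ((ρ ⊗ₖ (1 : Matrix (Fin d × Fin d) (Fin d × Fin d) ℂ)) *ᵥ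
      testVector d c) = 2 * ρ.trace + 2 * ρ c c := by
  simp [testVector, kroneckerMap_apply, one_apply, trace, dotProduct, mulVec,
    Fintype.sum_prod_type, mul_add, add_mul, ite_mul, mul_ite, Finset.mul_sum,
    Finset.sum_add_distrib, apply_ite (starRingEnd ℂ), Prod.ext_iff, ite_and]
  rw [← Finset.mul_sum]
  ring

theorem mul_sq_le_of_posSemidef_kronecker_one_sub {d : ℕ} {ρ : Matrix (Fin d) (Fin d) ℂ}
    {p : ℝ}
    (h : (ρ ⊗ₖ (1 : Matrix (Fin d × Fin d) (Fin d × Fin d) ℂ) - (p : ℂ) • Ctrace21 d).PosSemidef)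
    (c : Fin d) : (p : ℂ) * ((d : ℂ) + 1) ^ 2 ≤ 2 * ρ.trace + 2 * ρ c c := by
  have hform := h.dotProduct_mulVec_nonneg (testVector d c)
  rwa [sub_mulVec, dotProduct_sub, smul_mulVec, dotProduct_smul, smul_eq_mul,
    star_testVector_dotProduct_Ctrace21_mulVec,
    star_testVector_dotProduct_kronecker_one_mulVec, sub_nonneg] at hform

theorem mul_mul_sq_le_trace_of_posSemidef_kronecker_one_sub {d : ℕ}
    {ρ : Matrix (Fin d) (Fin d) ℂ} {p : ℝ}
    (h : (ρ ⊗ₖ (1 : Matrix (Fin d × Fin d) (Fin d × Fin d) ℂ) - (p : ℂ) • Ctrace21 d).PosSemidef) :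
    (d : ℂ) * p * ((d : ℂ) + 1) ^ 2 ≤ 2 * ((d : ℂ) + 1) * ρ.trace := by
  have hsum := Finset.sum_le_sum (s := Finset.univ) fun c _ =>
    mul_sq_le_of_posSemidef_kronecker_one_sub h c
  simp only [Finset.sum_const, Finset.card_univ, Fintype.card_fin, nsmul_eq_mul,
    Finset.sum_add_distrib, ← Finset.mul_sum] at hsum
  convert hsum using 1
  · ring
  · simp only [trace, diag]
    ring

theorem trace_two_to_one_sim_prob_general (d : ℕ) (hd : 1 ≤ d) (p : ℝ) :
    (∃ ρ₀ : Matrix (Fin d) (Fin d) ℂ, ρ₀.PosSemidef ∧ ρ₀.trace = 1 ∧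
        (ρ₀ ⊗ₖ (1 : Matrix (Fin d × Fin d) (Fin d × Fin d) ℂ) -
          (p : ℂ) • Ctrace21 d).PosSemidef)
      ↔ p ≤ 2 / ((d : ℝ) * (d + 1)) := by
  have hdR : (1 : ℝ) ≤ d := by exact_mod_cast hd
  rw [le_div_iff₀ (by positivity)]
  constructor
  · rintro ⟨ρ₀, -, htr, hM⟩
    have hbound := mul_mul_sq_le_trace_of_posSemidef_kronecker_one_sub hM
    rw [htr, mul_one] at hbound
    have hbound' : (d : ℝ) * p * ((d : ℝ) + 1) ^ 2 ≤ 2 * ((d : ℝ) + 1) := by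
      exact_mod_cast hbound
    nlinarith
  · intro hp
    refine ⟨((d : ℝ)⁻¹ : ℂ) • 1, PosSemidef.one.smul (by positivity), ?_, ?_⟩
    · simp [trace_smul, (show (d : ℂ) ≠ 0 by exact_mod_cast (by omega : d ≠ 0))]
    · have hR := (isHermitian_ketBraI01 d).add (isHermitian_ketBraI02 d)
      have hpsd := hR.posSemidef_smul_one_sub_smul (c := (d : ℝ)⁻¹) (t := p / 2) fun i => by
        rcases eigenvalues_ketBraI01_add_ketBraI02 d hR i with h0 | h0 | h0 <;> rw [h0]
        all_goals
          rw [sub_nonneg, ← one_div, le_div_iff₀ (by positivity)]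
          -- for `μ = d - 1`: a convex combination of the cases `μ = 0` and `μ = d + 1`
          nlinarith [mul_nonneg (sub_nonneg.2 hdR) (sub_nonneg.2 hp)]
      rw [smul_kronecker, one_kronecker_one, Ctrace21_eq_smul_add, smul_smul]
      simpa [div_eq_mul_inv] using hpsd

/-- The maximum probability of teleporting one copy of a state from two input copies in
the future to the past is 2/(d(d+1)). -/
theorem trace_two_to_one_sim_prob (d : ℕ) (hd : 1 ≤ d) (p : ℝ) (hp : 0 ≤ p) :
    (∃ ρ₀ : Matrix (Fin d) (Fin d) ℂ, ρ₀.PosSemidef ∧ ρ₀.trace = 1 ∧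
        (ρ₀ ⊗ₖ (1 : Matrix (Fin d × Fin d) (Fin d × Fin d) ℂ) -
          (p : ℂ) • Ctrace21 d).PosSemidef)
      ↔ p ≤ 2 / ((d : ℝ) * (d + 1)) :=
  trace_two_to_one_sim_prob_general d hd p
end

section
/- Let d ≥ 1 and N ≥ 0. Index the N-fold tensor power of ℂ^d by functions f : Fin N → Fin d, and for a permutation π of Fin N let U_π be the 0–1 matrix with entry (f,g) equal to 1 iff g = f ∘ π. Let P₊^{(N)} := (1/N!)·∑_{π ∈ S_N} U_π be the symmetrizer. Then the trace of P₊^{(N)} equals the binomial coefficient C(d+N−1, N). (The dimension of the symmetric subspace of N d-dimensional systems is d₊^{(N)} = C(d+N−1, N).) -/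
/-!
The trace of `U_π` counts the tuples `f : Fin N → Fin d` fixed by `π`, so by Burnside's lemma
`N! · tr P₊` is `N!` times the number of `S_N`-orbits of such tuples. Two tuples lie in the same
orbit iff they sort to the same monotone tuple, so orbits correspond to elements of
`Sym (Fin d) N`, of which there are `C(d + N - 1, N)`.
-/

open Matrix
open scoped Kronecker ComplexOrder

/-- The permutation matrix on the N-fold tensor power of ℂ^d associated to a
permutation π of the tensor factors. -/
noncomputable def permMat (d k : ℕ) (π : Equiv.Perm (Fin k)) :
    Matrix (Fin k → Fin d) (Fin k → Fin d) ℂ :=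
  Matrix.of fun f g => if g = f ∘ π then 1 else 0

/-- The symmetrizer: the orthogonal projection onto the symmetric subspace of the
k-fold tensor power of ℂ^d. -/
noncomputable def symProj (d k : ℕ) : Matrix (Fin k → Fin d) (Fin k → Fin d) ℂ :=
  (1 / (Nat.factorial k : ℂ)) • ∑ π : Equiv.Perm (Fin k), permMat d k π

open Equiv MulAction

theorem Tuple.exists_perm_comp_eq_of_perm_ofFn {α : Type*} [LinearOrder α] {n : ℕ}
    {f g : Fin n → α} (h : (List.ofFn f).Perm (List.ofFn g)) : ∃ σ : Perm (Fin n), g ∘ σ = f := by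
  refine ⟨(Tuple.sort f).symm.trans (Tuple.sort g), ?_⟩
  -- Sorting `f` and `g` yields the same monotone tuple.
  have hsorted : f ∘ Tuple.sort f = g ∘ Tuple.sort g := by
    refine List.ofFn_injective (List.Perm.eq_of_sortedLE ?_ ?_ ?_)
    · exact List.sortedLE_ofFn_iff.2 (Tuple.monotone_sort f)
    · exact List.sortedLE_ofFn_iff.2 (Tuple.monotone_sort g)
    · exact ((Tuple.sort f).ofFn_comp_perm f).trans
        (h.trans ((Tuple.sort g).ofFn_comp_perm g).symm)
  funext x
  simpa using (congrFun hsorted ((Tuple.sort f).symm x)).symm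

attribute [local instance] arrowAction

theorem Tuple.perm_smul_eq_comp {α : Type*} {n : ℕ} (π : Perm (Fin n)) (f : Fin n → α) :
    π • f = f ∘ π.symm :=
  rfl

theorem Tuple.mem_orbit_perm_iff {α : Type*} [LinearOrder α] {n : ℕ} (f g : Fin n → α) :
    f ∈ orbit (Perm (Fin n)) g ↔ (List.ofFn f).Perm (List.ofFn g) := by
  refine ⟨?_, fun h => ?_⟩
  · rintro ⟨π, rfl⟩
    exact π⁻¹.ofFn_comp_perm g
  · obtain ⟨σ, rfl⟩ := Tuple.exists_perm_comp_eq_of_perm_ofFn h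
    exact ⟨σ.symm, (Tuple.perm_smul_eq_comp _ _).trans (by rw [symm_symm])⟩

noncomputable def Tuple.orbitRelQuotientPermEquivSym (α : Type*) [LinearOrder α] (n : ℕ) :
    orbitRel.Quotient (Perm (Fin n)) (Fin n → α) ≃ Sym α n :=
  (Quotient.congr (vectorEquivFin α n).symm fun f g => by
      change f ∈ orbit _ g ↔ (List.Vector.ofFn f).toList.Perm (List.Vector.ofFn g).toList
      rw [Tuple.mem_orbit_perm_iff, List.Vector.toList_ofFn, List.Vector.toList_ofFn]).trans
    Sym.symEquivSym'.symm

theorem Tuple.card_orbitRelQuotient_perm (d n : ℕ) :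
    Nat.card (orbitRel.Quotient (Perm (Fin n)) (Fin n → Fin d)) = (d + n - 1).choose n := by
  rw [Nat.card_congr (Tuple.orbitRelQuotientPermEquivSym (Fin d) n), Nat.card_eq_fintype_card,
    Sym.card_sym_eq_choose, Fintype.card_fin]

theorem trace_permMat (d k : ℕ) (π : Perm (Fin k)) :
    (permMat d k π).trace = Nat.card (fixedBy (Fin k → Fin d) π) := by
  classical
  have hfixed (f : Fin k → Fin d) : π • f = f ↔ f = f ∘ π := by
    rw [Tuple.perm_smul_eq_comp, comp_symm_eq, eq_comm]
  simp [Matrix.trace, permMat, Nat.card_eq_fintype_card, Fintype.card_subtype, hfixed]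

theorem symProj_trace_general (d N : ℕ) :
    (symProj d N).trace = (Nat.choose (d + N - 1) N : ℂ) := by
  classical
  have burnside := sum_card_fixedBy_eq_card_orbits_mul_card_group (Perm (Fin N)) (Fin N → Fin d)
  simp only [← Nat.card_eq_fintype_card, Tuple.card_orbitRelQuotient_perm, Nat.card_perm,
    Nat.card_fin] at burnside
  rw [symProj, trace_smul, trace_sum]
  simp only [trace_permMat]
  rw [← Nat.cast_sum, burnside]
  push_cast
  rw [smul_eq_mul]
  field_simp

/-- The dimension of the symmetric subspace of N d-dimensional systems is C(d+N-1, N). -/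
theorem symProj_trace (d N : ℕ) (hd : 1 ≤ d) :
    (symProj d N).trace = (Nat.choose (d + N - 1) N : ℂ) :=
  symProj_trace_general d N
end

section
/- Let d ≥ 1 and 1 ≤ M ≤ N. Index the k-fold tensor power of ℂ^d by functions Fin k → Fin d and let P₊^{(k)} := (1/k!)·∑_{π ∈ S_k} U_π be the symmetrizer, where U_π has entry (f,g) equal to 1 iff g = f ∘ π. Identify Fin N with the juxtaposition of Fin (N−M) and Fin M. Then the partial trace of P₊^{(N)} over the last M tensor factors equals (d₊^{(N)}/d₊^{(N−M)})·P₊^{(N−M)}, where d₊^{(k)} := C(d+k−1, k); explicitly, for all f, g : Fin (N−M) → Fin d, ∑_{h : Fin M → Fin d} P₊^{(N)} (f ⊕ h, g ⊕ h) = (C(d+N−1,N)/C(d+N−M−1,N−M)) · P₊^{(N−M)} (f, g), where f ⊕ h : Fin N → Fin d denotes the concatenation of f and h. -/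
open Matrix
open scoped Kronecker ComplexOrder

/-- Concatenation of a function on the first N-M indices with a function on the last M
indices, under the identification of Fin N with Fin (N-M) ⊕ Fin M. -/
def concatNM (d M N : ℕ) (hMN : M ≤ N) (f : Fin (N - M) → Fin d) (h : Fin M → Fin d) :
    Fin N → Fin d :=
  fun i => if hi : (i : ℕ) < N - M then f ⟨i, hi⟩
    else h ⟨(i : ℕ) - (N - M), by have := i.isLt; omega⟩

/-- The number of permutations π with g = f ∘ π. -/
def cnt (d k : ℕ) (f g : Fin k → Fin d) : ℕ :=
  (Finset.univ.filter fun π : Equiv.Perm (Fin k) => g = f ∘ π).card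

lemma symProj_apply (d k : ℕ) (f g : Fin k → Fin d) :
    symProj d k f g = (cnt d k f g : ℂ) / (Nat.factorial k : ℂ) := by
  simp only [symProj, permMat, Matrix.smul_apply, Matrix.sum_apply, Matrix.of_apply, cnt,
    ← Finset.sum_boole, smul_eq_mul]
  ring

lemma cnt_comp {d a b : ℕ} (e : Fin a ≃ Fin b) (f g : Fin b → Fin d) :
    cnt d a (f ∘ e) (g ∘ e) = cnt d b f g := by
  unfold cnt
  apply Finset.card_equiv e.permCongr
  intro π
  simp only [Finset.mem_filter, Finset.mem_univ, true_and, funext_iff, Function.comp_apply,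
    Equiv.permCongr_apply]
  constructor
  · intro H y
    simpa using H (e.symm y)
  · intro H x
    simpa using H (e x)

lemma cnt_comp_cast {d a b : ℕ} (h : a = b) (f g : Fin b → Fin d) :
    cnt d a (f ∘ Fin.cast h) (g ∘ Fin.cast h) = cnt d b f g :=
  cnt_comp (finCongr h) f g

open Equiv Equiv.Perm in
lemma cond_zero {d k : ℕ} (f g : Fin k → Fin d) (x : Fin d) (σ : Perm (Fin k)) :
    (Fin.cons x g = Fin.cons x f ∘ (decomposeFin.symm (0, σ) : Perm (Fin (k+1))))
      ↔ g = f ∘ σ := by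
  simp only [funext_iff, Fin.forall_fin_succ, Function.comp_apply,
    decomposeFin_symm_apply_zero, decomposeFin_symm_apply_succ, Equiv.swap_self,
    Equiv.refl_apply, Fin.cons_zero, Fin.cons_succ]
  tauto

open Equiv Equiv.Perm in
lemma cond_succ {d k : ℕ} (f g : Fin k → Fin d) (x : Fin d) (j : Fin k) (σ : Perm (Fin k)) :
    (Fin.cons x g = Fin.cons x f ∘ (decomposeFin.symm (j.succ, σ) : Perm (Fin (k+1))))
      ↔ (x = f j ∧ g = f ∘ σ) := by
  simp only [funext_iff, Fin.forall_fin_succ, Function.comp_apply,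
    decomposeFin_symm_apply_zero, decomposeFin_symm_apply_succ,
    Fin.cons_zero, Fin.cons_succ]
  constructor
  · rintro ⟨h0, hs⟩
    refine ⟨h0, fun i => ?_⟩
    have := hs i
    rcases eq_or_ne (σ i) j with hij | hij
    · rw [hij] at this ⊢
      rw [Equiv.swap_apply_right, Fin.cons_zero] at this
      rw [this, h0]
    · rwa [Equiv.swap_apply_of_ne_of_ne (Fin.succ_ne_zero _)
        (fun hc => hij (Fin.succ_injective _ hc)), Fin.cons_succ] at this
  · rintro ⟨h0, hs⟩
    refine ⟨h0, fun i => ?_⟩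
    rcases eq_or_ne (σ i) j with hij | hij
    · rw [hij, Equiv.swap_apply_right, Fin.cons_zero, hs i, hij, h0]
    · rw [Equiv.swap_apply_of_ne_of_ne (Fin.succ_ne_zero _)
        (fun hc => hij (Fin.succ_injective _ hc)), Fin.cons_succ]
      exact hs i

open Equiv Equiv.Perm in
lemma sum_cnt_cons (d k : ℕ) (f g : Fin k → Fin d) :
    ∑ x : Fin d, cnt d (k+1) (Fin.cons x f) (Fin.cons x g) = (d + k) * cnt d k f g := by
  have key : ∀ x : Fin d, cnt d (k+1) (Fin.cons x f) (Fin.cons x g)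
      = ∑ p : Fin (k+1), ∑ σ : Perm (Fin k),
          if Fin.cons x g = Fin.cons x f ∘ (decomposeFin.symm (p, σ) : Perm (Fin (k+1)))
          then 1 else 0 := by
    intro x
    rw [cnt, Finset.card_filter]
    calc (∑ π : Perm (Fin (k+1)),
            if Fin.cons x g = Fin.cons x f ∘ π then 1 else 0)
        = ∑ q : Fin (k+1) × Perm (Fin k),
            if Fin.cons x g = Fin.cons x f ∘ (decomposeFin.symm q : Perm (Fin (k+1)))
            then 1 else 0 := Fintype.sum_equiv decomposeFin _ _ (fun π => by simp)
      _ = _ := Fintype.sum_prod_type _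
  simp only [key]
  rw [Finset.sum_comm]
  rw [Fin.sum_univ_succ]
  have hcnt : (cnt d k f g : ℕ) = ∑ σ : Perm (Fin k), if g = f ∘ σ then 1 else 0 :=
    Finset.card_filter _ _
  have h0 : (∑ x : Fin d, ∑ σ : Perm (Fin k),
      if Fin.cons x g = Fin.cons x f ∘ (decomposeFin.symm (0, σ) : Perm (Fin (k+1)))
      then 1 else 0) = d * cnt d k f g := by
    simp only [cond_zero, ← hcnt]
    rw [Finset.sum_const, Finset.card_univ, Fintype.card_fin, smul_eq_mul]
  have h1 : ∀ j : Fin k, (∑ x : Fin d, ∑ σ : Perm (Fin k),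
      if Fin.cons x g = Fin.cons x f ∘ (decomposeFin.symm (j.succ, σ) : Perm (Fin (k+1)))
      then 1 else 0) = cnt d k f g := by
    intro j
    rw [Finset.sum_comm]
    simp only [cond_succ, ite_and]
    simp only [Finset.sum_ite_eq', Finset.mem_univ, if_true]
    exact hcnt.symm
  rw [h0]
  simp only [h1]
  rw [Finset.sum_const, Finset.card_univ, Fintype.card_fin, smul_eq_mul]
  ring

lemma sum_cnt_append (d k : ℕ) : ∀ (M : ℕ) (f g : Fin k → Fin d),
    (∑ h : Fin M → Fin d, cnt d (M + k) (Fin.append h f) (Fin.append h g))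
      = (d + k).ascFactorial M * cnt d k f g := by
  intro M
  induction M with
  | zero =>
    intro f g
    rw [Fintype.sum_unique]
    rw [Subsingleton.elim (default : Fin 0 → Fin d) Fin.elim0, Fin.elim0_append,
      Fin.elim0_append, cnt_comp_cast]
    simp [Nat.ascFactorial_zero]
  | succ M ih =>
    intro f g
    have step : ∀ p : Fin d × (Fin M → Fin d),
        cnt d (M + 1 + k) (Fin.append (Fin.cons p.1 p.2) f) (Fin.append (Fin.cons p.1 p.2) g)
          = cnt d (M + k + 1) (Fin.cons p.1 (Fin.append p.2 f))
              (Fin.cons p.1 (Fin.append p.2 g)) := by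
      intro p
      rw [Fin.append_cons, Fin.append_cons, cnt_comp_cast]
    calc (∑ h : Fin (M+1) → Fin d, cnt d (M+1+k) (Fin.append h f) (Fin.append h g))
        = ∑ p : Fin d × (Fin M → Fin d),
            cnt d (M+1+k) (Fin.append (Fin.cons p.1 p.2) f)
              (Fin.append (Fin.cons p.1 p.2) g) :=
          (Fintype.sum_equiv (Fin.consEquiv (fun _ : Fin (M+1) => Fin d)) _ _
            (fun p => rfl)).symm
      _ = ∑ x : Fin d, ∑ h : Fin M → Fin d,
            cnt d (M+k+1) (Fin.cons x (Fin.append h f)) (Fin.cons x (Fin.append h g)) := by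
          simp only [step]; exact Fintype.sum_prod_type _
      _ = ∑ h : Fin M → Fin d,
            (d + (M + k)) * cnt d (M+k) (Fin.append h f) (Fin.append h g) := by
          rw [Finset.sum_comm]
          exact Finset.sum_congr rfl fun h _ => sum_cnt_cons d (M+k) _ _
      _ = (d + (M+k)) * ((d + k).ascFactorial M * cnt d k f g) := by
          rw [← Finset.mul_sum, ih]
      _ = (d + k).ascFactorial (M+1) * cnt d k f g := by
          rw [Nat.ascFactorial_succ, show d + (M+k) = d+k+M by ring, mul_assoc]

lemma concat_eq_append (d M N : ℕ) (hMN : M ≤ N) (f : Fin (N-M) → Fin d) (h : Fin M → Fin d)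
    (hc : M + (N - M) = N) :
    (concatNM d M N hMN f h) ∘ (Fin.rev ∘ Fin.cast hc)
      = Fin.append (h ∘ Fin.rev) (f ∘ Fin.rev) := by
  funext j
  rcases j with ⟨v, hv⟩
  simp only [Function.comp_apply, concatNM, Fin.append, Fin.addCases, Fin.cast, Fin.rev,
    Fin.castLT, Fin.subNat, Fin.coe_cast, eq_rec_constant]
  split_ifs with h1 h2 h2 <;> first
    | (exact absurd h1 (by omega))
    | (exact absurd h2 (by omega))
    | (congr 1; apply Fin.ext; simp; omega)

open Nat in
lemma nat_id (d M N : ℕ) (hd : 1 ≤ d) (hMN : M ≤ N) :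
    (d + (N - M)).ascFactorial M * (Nat.choose (d + (N - M) - 1) (N - M) * (N - M)!)
      = Nat.choose (d + N - 1) N * N ! := by
  set K := N - M with hK
  apply Nat.eq_of_mul_eq_mul_right (Nat.factorial_pos (d-1))
  have h1 : Nat.choose (d + K - 1) K * K ! * (d-1)! = (d + K - 1)! := by
    have := Nat.choose_mul_factorial_mul_factorial (n := d + K - 1) (k := K) (by omega)
    simpa [show d + K - 1 - K = d - 1 by omega] using this
  have h2 : Nat.choose (d + N - 1) N * N ! * (d-1)! = (d + N - 1)! := by
    have := Nat.choose_mul_factorial_mul_factorial (n := d + N - 1) (k := N) (by omega)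
    simpa [show d + N - 1 - N = d - 1 by omega] using this
  calc (d+K).ascFactorial M * (Nat.choose (d + K - 1) K * K !) * (d-1)!
      = (d+K).ascFactorial M * (Nat.choose (d + K - 1) K * K ! * (d-1)!) := by ring
    _ = (d+K).ascFactorial M * (d + K - 1)! := by rw [h1]
    _ = (d + K - 1)! * (d + K - 1 + 1).ascFactorial M := by
        rw [mul_comm]; congr 2; omega
    _ = (d + K - 1 + M)! := Nat.factorial_mul_ascFactorial _ _
    _ = (d + N - 1)! := by congr 1; omega
    _ = _ := h2.symm

/-- The partial trace of the symmetrizer P₊^{(N)} over the last M tensor factors equals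
(d₊^{(N)}/d₊^{(N-M)}) · P₊^{(N-M)}. -/
theorem symProj_partialTrace (d M N : ℕ) (hd : 1 ≤ d) (hM : 1 ≤ M) (hMN : M ≤ N)
    (f g : Fin (N - M) → Fin d) :
    ∑ h : Fin M → Fin d,
        symProj d N (concatNM d M N hMN f h) (concatNM d M N hMN g h) =
      ((Nat.choose (d + N - 1) N : ℂ) / (Nat.choose (d + (N - M) - 1) (N - M) : ℂ)) *
        symProj d (N - M) f g := by
  have hc : M + (N - M) = N := by omega
  have key : (∑ h : Fin M → Fin d,
        cnt d N (concatNM d M N hMN f h) (concatNM d M N hMN g h))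
      = (d + (N - M)).ascFactorial M * cnt d (N - M) f g := by
    have he : ∀ F : Fin N → Fin d,
        F ∘ ((finCongr hc).trans (Fin.revPerm) : Fin (M + (N-M)) ≃ Fin N)
          = F ∘ (Fin.rev ∘ Fin.cast hc) := by
      intro F; funext j; rfl
    have hstep : ∀ h : Fin M → Fin d,
        cnt d N (concatNM d M N hMN f h) (concatNM d M N hMN g h)
          = cnt d (M + (N-M)) (Fin.append (h ∘ Fin.rev) (f ∘ Fin.rev))
              (Fin.append (h ∘ Fin.rev) (g ∘ Fin.rev)) := by
      intro h
      rw [← cnt_comp ((finCongr hc).trans (Fin.revPerm))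
        (concatNM d M N hMN f h) (concatNM d M N hMN g h),
        he, he, concat_eq_append d M N hMN f h hc, concat_eq_append d M N hMN g h hc]
    simp only [hstep]
    have hbij : Function.Bijective (fun h : Fin M → Fin d => h ∘ Fin.rev) := by
      apply Function.Involutive.bijective
      intro h; funext i; simp [Fin.rev_rev]
    rw [Fintype.sum_bijective (fun h : Fin M → Fin d => h ∘ Fin.rev) hbij _
      (fun h => cnt d (M + (N-M)) (Fin.append h (f ∘ Fin.rev))
        (Fin.append h (g ∘ Fin.rev))) (fun h => rfl)]
    rw [sum_cnt_append d (N-M) M (f ∘ Fin.rev) (g ∘ Fin.rev)]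
    congr 1
    have : ∀ F : Fin (N-M) → Fin d, F ∘ Fin.rev = F ∘ (Fin.revPerm : Equiv.Perm (Fin (N-M))) := by
      intro F; funext i; simp
    rw [this f, this g, cnt_comp]
  simp only [symProj_apply]
  rw [← Finset.sum_div, ← Nat.cast_sum, key]
  have hN : (Nat.factorial N : ℂ) ≠ 0 := Nat.cast_ne_zero.2 (Nat.factorial_ne_zero _)
  have hK : (Nat.factorial (N-M) : ℂ) ≠ 0 := Nat.cast_ne_zero.2 (Nat.factorial_ne_zero _)
  have hC : (Nat.choose (d + (N - M) - 1) (N - M) : ℂ) ≠ 0 :=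
    Nat.cast_ne_zero.2 (Nat.choose_pos (by omega)).ne'
  have nid := nat_id d M N hd hMN
  have nidC : ((d + (N - M)).ascFactorial M : ℂ) *
      ((Nat.choose (d + (N - M) - 1) (N - M) : ℂ) * ((N - M).factorial : ℂ))
      = (Nat.choose (d + N - 1) N : ℂ) * (N.factorial : ℂ) := by
    exact_mod_cast congrArg (Nat.cast : ℕ → ℂ) nid
  push_cast
  field_simp
  linear_combination (cnt d (N-M) f g : ℂ) * nidC
end

section
/- Let d ≥ 1 and 1 ≤ N ≤ M, with P₊^{(k)} the symmetrizer on (Fin k → Fin d) and d₊^{(k)} = C(d+k−1,k). Define the universal cloning map Clone sending a matrix ν indexed by (Fin N → Fin d) to the matrix Clone(ν) := (d₊^{(N)}/d₊^{(M)}) · P₊^{(M)} · ((P₊^{(N)} ν P₊^{(N)}) ⊗ I_{(Fin (M−N) → Fin d)}) · P₊^{(M)} indexed by (Fin M → Fin d), and the partial trace map TrCh sending a matrix μ indexed by (Fin M → Fin d) to TrCh(μ) := P₊^{(N)} · (partial trace over the last M−N tensor factors of P₊^{(M)} μ P₊^{(M)}) · P₊^{(N)}. Then for all matrices μ on (Fin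 M → Fin d) and ν on (Fin N → Fin d): Tr[μ · Clone(ν)] = (d₊^{(N)}/d₊^{(M)}) · Tr[TrCh(μ) · ν]. (Time-reversal duality: universal cloning in the Heisenberg picture is, up to the positive factor d₊^{(N)}/d₊^{(M)}, the partial trace channel in the Schrödinger picture.) -/
open Matrix
open scoped Kronecker ComplexOrder

/-- Restriction of g : Fin M → Fin d to the first N tensor factors (N ≤ M). -/
def headN (d N M : ℕ) (hNM : N ≤ M) (g : Fin M → Fin d) : Fin N → Fin d :=
  fun i => g ⟨i, lt_of_lt_of_le i.isLt hNM⟩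

/-- Restriction of g : Fin M → Fin d to the last M - N tensor factors. -/
def tailN (d N M : ℕ) (hNM : N ≤ M) (g : Fin M → Fin d) : Fin (M - N) → Fin d :=
  fun i => g ⟨N + i, by have := i.isLt; omega⟩

/-- Concatenation of f : Fin N → Fin d with h : Fin (M-N) → Fin d, under the
identification of Fin M with Fin N ⊕ Fin (M-N). -/
def concatN (d N M : ℕ) (hNM : N ≤ M) (f : Fin N → Fin d) (h : Fin (M - N) → Fin d) :
    Fin M → Fin d :=
  fun i => if hi : (i : ℕ) < N then f ⟨i, hi⟩
    else h ⟨(i : ℕ) - N, by have := i.isLt; omega⟩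

/-- The matrix A ⊗ I on the M-fold tensor power, where A acts on the first N factors
and the identity on the last M - N factors. -/
noncomputable def extendN (d N M : ℕ) (hNM : N ≤ M)
    (A : Matrix (Fin N → Fin d) (Fin N → Fin d) ℂ) :
    Matrix (Fin M → Fin d) (Fin M → Fin d) ℂ :=
  Matrix.of fun f g =>
    A (headN d N M hNM f) (headN d N M hNM g) *
      (if tailN d N M hNM f = tailN d N M hNM g then 1 else 0)

/-- The optimal universal cloning map from N to M ≥ N copies:
Clone(ν) = (d₊^{(N)}/d₊^{(M)}) · P₊^{(M)} ((P₊^{(N)} ν P₊^{(N)}) ⊗ I) P₊^{(M)}. -/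
noncomputable def Clone (d N M : ℕ) (hNM : N ≤ M)
    (ν : Matrix (Fin N → Fin d) (Fin N → Fin d) ℂ) :
    Matrix (Fin M → Fin d) (Fin M → Fin d) ℂ :=
  ((Nat.choose (d + N - 1) N : ℂ) / (Nat.choose (d + M - 1) M : ℂ)) •
    (symProj d M * extendN d N M hNM (symProj d N * ν * symProj d N) * symProj d M)

/-- The partial trace over the last M - N tensor factors. -/
noncomputable def ptraceN (d N M : ℕ) (hNM : N ≤ M)
    (A : Matrix (Fin M → Fin d) (Fin M → Fin d) ℂ) :
    Matrix (Fin N → Fin d) (Fin N → Fin d) ℂ :=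
  Matrix.of fun f g =>
    ∑ h : Fin (M - N) → Fin d, A (concatN d N M hNM f h) (concatN d N M hNM g h)

/-- The symmetric partial trace channel from M to N ≤ M copies:
TrCh(μ) = P₊^{(N)} Tr_{N+1,…,M}[P₊^{(M)} μ P₊^{(M)}] P₊^{(N)}. -/
noncomputable def TrCh (d N M : ℕ) (hNM : N ≤ M)
    (μ : Matrix (Fin M → Fin d) (Fin M → Fin d) ℂ) :
    Matrix (Fin N → Fin d) (Fin N → Fin d) ℂ :=
  symProj d N * ptraceN d N M hNM (symProj d M * μ * symProj d M) * symProj d N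

/-- Splitting of Fin M → Fin d into head and tail parts. -/
def splitE (d N M : ℕ) (hNM : N ≤ M) :
    (Fin M → Fin d) ≃ (Fin N → Fin d) × (Fin (M - N) → Fin d) where
  toFun g := (headN d N M hNM g, tailN d N M hNM g)
  invFun p := concatN d N M hNM p.1 p.2
  left_inv g := by
    funext i
    by_cases hi : (i : ℕ) < N
    · simp [concatN, headN, hi]
    · simp only [concatN, tailN, dif_neg hi]
      exact congrArg g (Fin.ext (by simp; omega))
  right_inv p := by
    ext i
    · simp [concatN, headN, i.isLt]
    · simp only [concatN, headN, tailN]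
      have : ¬ (N + (i : ℕ) < N) := by omega
      rw [dif_neg this]
      simp

lemma headN_concatN (d N M : ℕ) (hNM : N ≤ M) (f : Fin N → Fin d)
    (h : Fin (M - N) → Fin d) : headN d N M hNM (concatN d N M hNM f h) = f :=
  congrArg Prod.fst ((splitE d N M hNM).right_inv (f, h))

lemma tailN_concatN (d N M : ℕ) (hNM : N ≤ M) (f : Fin N → Fin d)
    (h : Fin (M - N) → Fin d) : tailN d N M hNM (concatN d N M hNM f h) = h :=
  congrArg Prod.snd ((splitE d N M hNM).right_inv (f, h))

lemma trace_mul_extendN (d N M : ℕ) (hNM : N ≤ M)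
    (B : Matrix (Fin M → Fin d) (Fin M → Fin d) ℂ)
    (A : Matrix (Fin N → Fin d) (Fin N → Fin d) ℂ) :
    (B * extendN d N M hNM A).trace = (ptraceN d N M hNM B * A).trace := by
  simp only [Matrix.trace, Matrix.diag, Matrix.mul_apply, extendN, ptraceN,
    Matrix.of_apply, Finset.sum_mul]
  rw [← ((splitE d N M hNM).symm.sum_comp
    (fun x => ∑ y, B x y * (A (headN d N M hNM y) (headN d N M hNM x) *
      if tailN d N M hNM y = tailN d N M hNM x then 1 else 0)))]
  simp only [Fintype.sum_prod_type]
  refine Fintype.sum_congr _ _ fun f => ?_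
  simp only [splitE, Equiv.coe_fn_symm_mk, headN_concatN, tailN_concatN]
  refine Eq.trans (Fintype.sum_congr _
      (fun h => ∑ g, B (concatN d N M hNM f h) (concatN d N M hNM g h) * A g f)
      fun h => ?_) Finset.sum_comm
  rw [← ((splitE d N M hNM).symm.sum_comp
    (fun y => B (concatN d N M hNM f h) y * (A (headN d N M hNM y) f *
      if tailN d N M hNM y = h then 1 else 0)))]
  simp only [Fintype.sum_prod_type, splitE, Equiv.coe_fn_symm_mk, headN_concatN,
    tailN_concatN]
  refine Fintype.sum_congr _ _ fun g => ?_
  simp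

/-- Time-reversal duality: universal cloning in the Heisenberg picture is, up to the
positive factor d₊^{(N)}/d₊^{(M)}, the partial trace channel in the Schrödinger
picture. -/
theorem clone_trace_duality (d N M : ℕ) (hd : 1 ≤ d) (hN : 1 ≤ N) (hNM : N ≤ M)
    (μ : Matrix (Fin M → Fin d) (Fin M → Fin d) ℂ)
    (ν : Matrix (Fin N → Fin d) (Fin N → Fin d) ℂ) :
    (μ * Clone d N M hNM ν).trace =
      ((Nat.choose (d + N - 1) N : ℂ) / (Nat.choose (d + M - 1) M : ℂ)) *
        (TrCh d N M hNM μ * ν).trace := by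
  unfold Clone TrCh
  rw [Matrix.mul_smul, Matrix.trace_smul, smul_eq_mul]
  congr 1
  calc (μ * (symProj d M * extendN d N M hNM (symProj d N * ν * symProj d N) *
        symProj d M)).trace
      = ((symProj d M * μ * symProj d M) *
          extendN d N M hNM (symProj d N * ν * symProj d N)).trace := by
        rw [show μ * (symProj d M * extendN d N M hNM (symProj d N * ν * symProj d N) *
            symProj d M) = (μ * symProj d M *
            extendN d N M hNM (symProj d N * ν * symProj d N)) * symProj d M by
          simp [Matrix.mul_assoc]]
        rw [Matrix.trace_mul_comm]
        simp [Matrix.mul_assoc]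
    _ = (ptraceN d N M hNM (symProj d M * μ * symProj d M) *
          (symProj d N * ν * symProj d N)).trace :=
        trace_mul_extendN d N M hNM _ _
    _ = (symProj d N * ptraceN d N M hNM (symProj d M * μ * symProj d M) *
          symProj d N * ν).trace := by
        rw [show ptraceN d N M hNM (symProj d M * μ * symProj d M) *
            (symProj d N * ν * symProj d N) =
            (ptraceN d N M hNM (symProj d M * μ * symProj d M) * symProj d N * ν) *
              symProj d N by simp [Matrix.mul_assoc]]
        rw [Matrix.trace_mul_comm]
        simp [Matrix.mul_assoc]
end

section
/- Statistical information bound. Let X and Y be finite nonempty sets and m ≥ 1. For each i ∈ X let σ_i be a density matrix on Fin m (the channel output on the i-th input state), let ρ₀ be a density matrix on Fin m, and let p ≥ 0 be a real number such that ρ₀ − p·σ_i is positive semidefinite for every i ∈ X. Let (P_j)_{j ∈ Y} be positive semidefinite matrices on Fin m with ∑_{j ∈ Y} P_j = I_m, let π : X → ℝ with π_i ≥ 0 and ∑_{i ∈ X} π_i = 1, and let f : X × Y → ℝ with f(i,j) ≥ 0. Then p · ∑_{i ∈ X} π_i ∑_{j ∈ Y} f(i,j) · Re(Tr[σ_i P_j])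 ≤ max_{j ∈ Y} ∑_{i ∈ X} π_i · f(i,j). (The probability of simulating a channel from the future to the past is at most the inverse of the expected payoff achievable by communicating through the channel.) -/
/-!
The causality bound `p • σᵢ ≤ ρ₀` survives measurement: pairing with the effect `Pⱼ` gives
`p · Tr[σᵢ Pⱼ] ≤ Tr[ρ₀ Pⱼ]`. So, up to the factor `p`, every outcome distribution `j ↦ Tr[σᵢ Pⱼ]`
is dominated by the single distribution `j ↦ Tr[ρ₀ Pⱼ]`, which does not depend on the message `i`.
Against a message-independent guess the expected payoff is an average over `j` of
`∑ᵢ πᵢ f(i, j)`, hence at most its maximum.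
-/

open Matrix
open scoped ComplexOrder

namespace Matrix.PosSemidef

variable {𝕜 n : Type*} [RCLike 𝕜] [Fintype n] {A B P : Matrix n n 𝕜}

theorem trace_mul_nonneg (hA : A.PosSemidef) (hB : B.PosSemidef) : 0 ≤ (A * B).trace := by
  classical
  obtain ⟨C, rfl⟩ : ∃ C : Matrix n n 𝕜, B = star C * C := by
    open scoped MatrixOrder in exact CStarAlgebra.nonneg_iff_eq_star_mul_self.mp hB.nonneg
  rw [← mul_assoc, trace_mul_cycle]
  exact (hA.mul_mul_conjTranspose_same C).trace_nonneg

theorem trace_mul_le_trace_mul (hBA : (B - A).PosSemidef) (hP : P.PosSemidef) :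
    (A * P).trace ≤ (B * P).trace := by
  simpa only [sub_mul, trace_sub, sub_nonneg] using hBA.trace_mul_nonneg hP

end Matrix.PosSemidef

theorem Matrix.sum_trace_mul_eq_trace {R n ι : Type*} [Semiring R] [Fintype n] [DecidableEq n]
    [Fintype ι] (A : Matrix n n R) {P : ι → Matrix n n R} (hP : ∑ j, P j = 1) :
    ∑ j, (A * P j).trace = A.trace := by
  rw [← trace_sum, ← Finset.mul_sum, hP, mul_one]

theorem Fintype.sum_mul_le_iSup_mul_sum {ι : Type*} [Fintype ι] (c w : ι → ℝ)
    (hw : ∀ i, 0 ≤ w i) : ∑ i, c i * w i ≤ (⨆ i, c i) * ∑ i, w i := by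
  rw [Finset.mul_sum]
  exact Finset.sum_le_sum fun i _ =>
    mul_le_mul_of_nonneg_right (le_ciSup (Set.finite_range c).bddAbove i) (hw i)

theorem mul_expected_payoff_le_iSup {X Y : Type*} [Fintype X] [Fintype Y]
    (p : ℝ) (q : X → Y → ℝ) (r : Y → ℝ) (hqr : ∀ i j, p * q i j ≤ r j)
    (hr : ∀ j, 0 ≤ r j) (hrsum : ∑ j, r j = 1)
    (π : X → ℝ) (hπ : ∀ i, 0 ≤ π i) (f : X → Y → ℝ) (hf : ∀ i j, 0 ≤ f i j) :
    p * ∑ i, π i * ∑ j, f i j * q i j ≤ ⨆ j, ∑ i, π i * f i j :=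
  calc p * ∑ i, π i * ∑ j, f i j * q i j
      = ∑ i, ∑ j, π i * (f i j * (p * q i j)) := by
        simp only [Finset.mul_sum]
        exact Finset.sum_congr rfl fun i _ => Finset.sum_congr rfl fun j _ => by ring
    _ ≤ ∑ i, ∑ j, π i * (f i j * r j) := by
        gcongr with i _ j _
        · exact hπ i
        · exact hf i j
        · exact hqr i j
    _ = ∑ j, (∑ i, π i * f i j) * r j := by
        rw [Finset.sum_comm]
        simp only [Finset.sum_mul, mul_assoc]
    _ ≤ ⨆ j, ∑ i, π i * f i j := by
        simpa only [hrsum, mul_one] using Fintype.sum_mul_le_iSup_mul_sum _ r hr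

theorem statistical_information_bound_general (X Y : Type) [Fintype X] [Fintype Y]
    (m : ℕ)
    (σ : X → Matrix (Fin m) (Fin m) ℂ)
    (ρ₀ : Matrix (Fin m) (Fin m) ℂ) (hρ₀ : ρ₀.PosSemidef) (hρ₀tr : ρ₀.trace = 1)
    (p : ℝ)
    (hcaus : ∀ i, (ρ₀ - (p : ℂ) • σ i).PosSemidef)
    (P : Y → Matrix (Fin m) (Fin m) ℂ)
    (hP : ∀ j, (P j).PosSemidef) (hPsum : ∑ j, P j = 1)
    (π : X → ℝ) (hπ : ∀ i, 0 ≤ π i)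
    (f : X → Y → ℝ) (hf : ∀ i j, 0 ≤ f i j) :
    p * ∑ i, π i * ∑ j, f i j * ((σ i * P j).trace).re ≤
      ⨆ j, ∑ i, π i * f i j := by
  refine mul_expected_payoff_le_iSup p _ (fun j => (ρ₀ * P j).trace.re) (fun i j => ?_)
    (fun j => ?_) ?_ π hπ f hf
  · have h := ((hcaus i).trace_mul_le_trace_mul (hP j)).1
    rwa [smul_mul_assoc, trace_smul, smul_eq_mul, Complex.re_ofReal_mul] at h
  · exact (Complex.nonneg_iff.mp (hρ₀.trace_mul_nonneg (hP j))).1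
  · rw [← Complex.re_sum, sum_trace_mul_eq_trace ρ₀ hPsum, hρ₀tr, Complex.one_re]

/-- Statistical information bound: the probability of simulating a channel from the
future to the past is at most the inverse of the expected payoff achievable by
communicating through the channel. -/
theorem statistical_information_bound (X Y : Type) [Fintype X] [Fintype Y]
    [Nonempty X] [Nonempty Y] (m : ℕ) (hm : 1 ≤ m)
    (σ : X → Matrix (Fin m) (Fin m) ℂ)
    (hσ : ∀ i, (σ i).PosSemidef) (hσtr : ∀ i, (σ i).trace = 1)
    (ρ₀ : Matrix (Fin m) (Fin m) ℂ) (hρ₀ : ρ₀.PosSemidef) (hρ₀tr : ρ₀.trace = 1)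
    (p : ℝ) (hp : 0 ≤ p)
    (hcaus : ∀ i, (ρ₀ - (p : ℂ) • σ i).PosSemidef)
    (P : Y → Matrix (Fin m) (Fin m) ℂ)
    (hP : ∀ j, (P j).PosSemidef) (hPsum : ∑ j, P j = 1)
    (π : X → ℝ) (hπ : ∀ i, 0 ≤ π i) (hπsum : ∑ i, π i = 1)
    (f : X → Y → ℝ) (hf : ∀ i j, 0 ≤ f i j) :
    p * ∑ i, π i * ∑ j, f i j * ((σ i * P j).trace).re ≤
      ⨆ j, ∑ i, π i * f i j :=
  statistical_information_bound_general X Y m σ ρ₀ hρ₀ hρ₀tr p hcaus P hP hPsum π hπ f hf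
end

section
/- Let d ≥ 1 and M ≥ 0 be fixed natural numbers and, for N ≥ M, set p_N := C(d+N−M−1, N−M) / (C(d+N−1, N) · C(d+M−1, M)) as a real number, where C(·,·) is the binomial coefficient. Then the sequence (p_N) converges as N → ∞ to 1 / C(d+M−1, M). (The maximum probability d₊^{(N−M)}/(d₊^{(N)}d₊^{(M)}) of teleporting M copies of a pure state from N input copies in the future to the past converges, as the number of input copies N tends to infinity, to 1/d₊^{(M)}; in particular for M = 1 the probability N/(d(d+N−1)) converges to the classical value 1/d.) -/
/-!
Multiplying by `n !` turns `C(k + n, k)` into the rising product `∏_{i < n} (k + i + 1)`, so for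
`N ≥ M` the ratio `C(N - M + n, N - M) / C(N + n, N)` is the product of the `n` ratios
`(N - M + i + 1) / (N + i + 1)`, each of which tends to `1`.
-/

open Filter Topology Finset Nat

theorem tendsto_natCast_add_div_natCast_add (a b : ℝ) :
    Tendsto (fun N : ℕ => (N + a) / (N + b)) atTop (𝓝 1) := by
  have hden : Tendsto (fun N : ℕ => (N : ℝ) + b) atTop atTop :=
    tendsto_atTop_add_const_right _ b tendsto_natCast_atTop_atTop
  have hsmall : Tendsto (fun N : ℕ => 1 + (a - b) / (N + b)) atTop (𝓝 1) := by
    simpa using (tendsto_const_nhds.div_atTop hden).const_add (1 : ℝ)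
  refine hsmall.congr' ?_
  filter_upwards [hden.eventually_ne_atTop 0] with N hN
  field_simp
  ring

theorem cast_choose_add_mul_factorial (k n : ℕ) :
    ((k + n).choose k : ℝ) * n ! = ∏ i ∈ range n, ((k : ℝ) + (i + 1)) := by
  rw [choose_symm_add, mul_comm]
  exact_mod_cast (ascFactorial_eq_factorial_mul_choose k n).symm.trans
    ((ascFactorial_eq_prod_range _ n).trans (prod_congr rfl fun i _ => by ring))

theorem tendsto_choose_sub_add_div_choose_add (n M : ℕ) :
    Tendsto (fun N : ℕ => ((N - M + n).choose (N - M) : ℝ) / (N + n).choose N)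
      atTop (𝓝 1) := by
  have hprod : Tendsto (fun N : ℕ => ∏ i ∈ range n, ((N : ℝ) + (i + 1 - M)) / (N + (i + 1)))
      atTop (𝓝 1) := by
    simpa using tendsto_finsetProd (range n) fun i _ =>
      tendsto_natCast_add_div_natCast_add ((i : ℝ) + 1 - M) ((i : ℝ) + 1)
  refine hprod.congr' ?_
  filter_upwards [eventually_ge_atTop M] with N hMN
  have hfac : (n ! : ℝ) ≠ 0 := by positivity
  rw [← mul_div_mul_right _ _ hfac, cast_choose_add_mul_factorial, cast_choose_add_mul_factorial,
    ← prod_div_distrib, cast_sub hMN]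
  exact prod_congr rfl fun i _ => by ring_nf

/-- The maximum probability d₊^{(N-M)}/(d₊^{(N)} d₊^{(M)}) of teleporting M copies of a
pure state from N input copies in the future to the past converges, as N → ∞, to
1/d₊^{(M)}. -/
theorem trace_channel_prob_tendsto (d M : ℕ) (hd : 1 ≤ d) :
    Filter.Tendsto
      (fun N : ℕ =>
        (Nat.choose (d + (N - M) - 1) (N - M) : ℝ) /
          ((Nat.choose (d + N - 1) N : ℝ) * (Nat.choose (d + M - 1) M : ℝ)))
      Filter.atTop (nhds (1 / (Nat.choose (d + M - 1) M : ℝ))) := by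
  obtain ⟨n, rfl⟩ : ∃ n, d = n + 1 := ⟨d - 1, by omega⟩
  have hshift (k : ℕ) : n + 1 + k - 1 = k + n := by omega
  simp only [hshift, ← div_div]
  exact (tendsto_choose_sub_add_div_choose_add n M).div_const _
end
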